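/- arXiv:1807.06449 — 6 statements merged into one kernel-verified Lean document; each statement's English description precedes it below -/
import Mathlib

section
/- Fix δ ∈ (0,1) and define f_δ(λ, x) = δ·λᵀh(x) − ln(1 − δ + δ·(1 + λᵀx)⁺) for λ, x ∈ ℝ^d, where h(x) = x·1_{|x|≤1} is the truncation function and (·)⁺ denotes the positive part. Then: (i) for |x| ≤ 1, −δ·|λ|²·|x|² ≤ f_δ(λ,x) ≤ max(1/(2(1−δ)²), −δ − ln(1−δ))·|λ|²·|x|²; (ii) for |x| > 1, −δ·|λ|·|x| ≤ f_δ(λ,x) ≤ −ln(1−δ). -/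
lemma L1 {u : ℝ} (hu : 0 ≤ u) : u - u^2/2 ≤ Real.log (1+u) := by
  rcases le_or_gt u 1 with h1 | h1
  · have hb := Real.exp_bound (x := u) (by rw [abs_of_nonneg hu]; exact h1) (n := 3) (by norm_num)
    have hsum : (∑ m ∈ Finset.range 3, u ^ m / m.factorial) = 1 + u + u^2/2 := by
      norm_num [Finset.sum_range_succ, Nat.factorial]
    rw [hsum, abs_of_nonneg hu] at hb
    have hb2 := (abs_sub_le_iff.1 hb).1
    norm_num [Nat.factorial] at hb2
    have hb' : Real.exp u ≤ 1 + u + u^2/2 + u^3 * (2/9) := by linarith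
    have h2 : Real.exp (u - u^2/2) * Real.exp (u^2/2) ≤ (1+u) * Real.exp (u^2/2) := by
      rw [← Real.exp_add]
      have hq : (1:ℝ) + u^2/2 ≤ Real.exp (u^2/2) := by
        have := Real.add_one_le_exp (u^2/2); linarith
      calc Real.exp (u - u^2/2 + u^2/2) = Real.exp u := by ring_nf
        _ ≤ 1 + u + u^2/2 + u^3 * (2/9) := hb'
        _ ≤ (1+u) * (1 + u^2/2) := by nlinarith
        _ ≤ (1+u) * Real.exp (u^2/2) := by nlinarith [Real.exp_pos (u^2/2)]
    have h3 : Real.exp (u - u^2/2) ≤ 1 + u :=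
      le_of_mul_le_mul_right h2 (Real.exp_pos _)
    exact (Real.le_log_iff_exp_le (by linarith)).2 h3
  · have : u - u^2/2 ≤ 1/2 := by nlinarith
    have hlog2 : (0.6931471803:ℝ) < Real.log 2 := Real.log_two_gt_d9
    have : Real.log 2 ≤ Real.log (1+u) := Real.log_le_log (by norm_num) (by linarith)
    linarith

lemma L2 {δ u : ℝ} (hδ0 : 0 < δ) (hδ1 : δ < 1) (hu : -δ ≤ u) (hu0 : u ≤ 0) :
    u - u^2/(2*(1-δ)^2) ≤ Real.log (1+u) := by
  set x := -u with hx
  have hx0 : 0 ≤ x := by simp [hx]; linarith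
  have hxδ : x ≤ δ := by simp [hx]; linarith
  have hxlt : |x| < 1 := by rw [abs_of_nonneg hx0]; linarith
  have hT := Real.abs_log_sub_add_sum_range_le hxlt 2
  have hsum : (∑ i ∈ Finset.range 2, x ^ (i + 1) / (i + 1)) = x + x^2/2 := by
    norm_num [Finset.sum_range_succ]
  rw [hsum, abs_of_nonneg hx0] at hT
  have hTl : -(x + x^2/2) - x^3/(1-x) ≤ Real.log (1-x) := by
    have h := neg_le_of_abs_le hT
    norm_num at h ⊢
    linarith
  have h1x : (0:ℝ) < 1 - x := by linarith
  have hcube : x^3/(1-x) ≤ x^2 * δ/(1-δ) := by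
    rw [div_le_div_iff₀ h1x (by linarith)]
    nlinarith
  have hkey : x^2/2 + x^2*δ/(1-δ) ≤ x^2/(2*(1-δ)^2) := by
    rw [div_add_div _ _ (by norm_num) (by linarith : (1:ℝ)-δ ≠ 0),
      div_le_div_iff₀ (by nlinarith) (by nlinarith)]
    nlinarith [mul_nonneg (mul_nonneg (sq_nonneg x) (sq_nonneg δ)) (by linarith : (0:ℝ) ≤ 1-δ)]
  have he1 : Real.log (1+u) = Real.log (1-x) := by rw [hx]; ring_nf
  have he2 : u = -x := by rw [hx]; ring
  rw [he1, he2]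
  have he3 : (-x)^2 = x^2 := by ring
  rw [he3]
  linarith

open scoped RealInnerProductSpace

set_option maxHeartbeats 1600000

theorem stmt_8 (d : ℕ) (δ : ℝ) (hδ : δ ∈ Set.Ioo (0:ℝ) 1)
    (fδ : EuclideanSpace ℝ (Fin d) → EuclideanSpace ℝ (Fin d) → ℝ)
    (hfδ : ∀ lam x, fδ lam x =
      δ * (if ‖x‖ ≤ 1 then ⟪lam, x⟫ else 0) - Real.log (1 - δ + δ * max (1 + ⟪lam, x⟫) 0)) :
    (∀ lam x, ‖x‖ ≤ 1 →
      -δ * ‖lam‖ ^ 2 * ‖x‖ ^ 2 ≤ fδ lam x ∧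
      fδ lam x ≤ max (1 / (2 * (1 - δ) ^ 2)) (-δ - Real.log (1 - δ)) * ‖lam‖ ^ 2 * ‖x‖ ^ 2) ∧
    (∀ lam x, 1 < ‖x‖ →
      -δ * ‖lam‖ * ‖x‖ ≤ fδ lam x ∧ fδ lam x ≤ -Real.log (1 - δ)) := by
  obtain ⟨hδ0, hδ1⟩ := hδ
  have h1δ : (0:ℝ) < 1 - δ := by linarith
  have hlogδ : Real.log (1-δ) ≤ -δ := by
    have := Real.log_le_sub_one_of_pos h1δ; linarith
  set C := max (1 / (2 * (1 - δ) ^ 2)) (-δ - Real.log (1 - δ)) with hC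
  have hC1 : 1 / (2 * (1 - δ) ^ 2) ≤ C := le_max_left _ _
  have hC2 : -δ - Real.log (1 - δ) ≤ C := le_max_right _ _
  have hC0 : 0 ≤ C := le_trans (by linarith) hC2
  clear_value C
  have hhalf : (1:ℝ)/2 ≤ 1/(2*(1-δ)^2) := by
    rw [div_le_div_iff₀ (by norm_num) (by positivity)]
    nlinarith
  constructor
  · intro lam x hx
    set t := ⟪lam, x⟫ with hti
    set s := ‖lam‖ ^ 2 * ‖x‖ ^ 2 with hs
    clear_value t
    have hts : t^2 ≤ s := by
      have h := abs_real_inner_le_norm lam x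
      rw [← hti] at h
      have := abs_nonneg t
      nlinarith [sq_abs t]
    have hs0 : 0 ≤ s := by positivity
    clear_value s
    rw [hfδ, if_pos hx, ← hti]
    have e1 : -δ * ‖lam‖ ^ 2 * ‖x‖ ^ 2 = -(δ*s) := by rw [hs]; ring
    have e2 : C * ‖lam‖ ^ 2 * ‖x‖ ^ 2 = C * s := by rw [hs]; ring
    rw [e1, e2]
    rcases le_or_gt (1 + t) 0 with hT | hT
    · rw [max_eq_right hT]
      simp only [mul_zero, add_zero]
      have ht1 : t ≤ -1 := by linarith
      have hs1 : 1 ≤ s := by nlinarith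
      have h0 : 0 ≤ δ*t + δ + δ*s := by nlinarith [sq_nonneg (t+1)]
      constructor
      · linarith
      · have h2 : C ≤ C * s := by nlinarith
        have : δ * t ≤ -δ := by nlinarith
        linarith
    · rw [max_eq_left (by linarith)]
      have harg : 1 - δ + δ * (1 + t) = 1 + δ * t := by ring
      rw [harg]
      have hargpos : 0 < 1 + δ * t := by nlinarith
      have hu2 : (δ*t)^2 ≤ s := by
        nlinarith [mul_nonneg (by nlinarith : (0:ℝ) ≤ 1 - δ^2) (sq_nonneg t)]
      constructor
      · have hl : Real.log (1 + δ * t) ≤ δ * t := by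
          have := Real.log_le_sub_one_of_pos hargpos; linarith
        have hds : 0 ≤ δ * s := mul_nonneg hδ0.le hs0
        linarith
      · rcases le_or_gt 0 t with ht0 | ht0
        · have hL1 := L1 (u := δ * t) (mul_nonneg hδ0.le ht0)
          calc δ * t - Real.log (1 + δ * t) ≤ (δ*t)^2/2 := by linarith
            _ = (δ*t)^2 * (1/2) := by ring
            _ ≤ s * (1/(2*(1-δ)^2)) := mul_le_mul hu2 hhalf (by norm_num) hs0
            _ ≤ s * C := mul_le_mul_of_nonneg_left hC1 hs0
            _ = C * s := by ring
        · have hL2 := L2 (δ := δ) (u := δ * t) hδ0 hδ1 (by nlinarith) (by nlinarith)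
          calc δ * t - Real.log (1 + δ * t) ≤ (δ*t)^2/(2*(1-δ)^2) := by linarith
            _ = (δ*t)^2 * (1/(2*(1-δ)^2)) := by ring
            _ ≤ s * C := mul_le_mul hu2 hC1 (by positivity) hs0
            _ = C * s := by ring
  · intro lam x hx
    set t := ⟪lam, x⟫ with hti
    clear_value t
    have hab : |t| ≤ ‖lam‖ * ‖x‖ := by
      rw [hti]; exact abs_real_inner_le_norm lam x
    have hab0 : 0 ≤ ‖lam‖ * ‖x‖ := by positivity
    rw [hfδ, if_neg (not_le.mpr hx), ← hti]
    have hm0 : 0 ≤ max (1 + t) 0 := le_max_right _ _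
    have hmle : max (1 + t) 0 ≤ 1 + ‖lam‖ * ‖x‖ := by
      apply max_le _ (by linarith)
      have := le_of_abs_le hab; linarith
    have hargpos : 0 < 1 - δ + δ * max (1 + t) 0 := by nlinarith
    constructor
    · have hl : Real.log (1 - δ + δ * max (1 + t) 0) ≤ δ * (‖lam‖ * ‖x‖) := by
        have := Real.log_le_sub_one_of_pos hargpos
        nlinarith
      nlinarith
    · have hl : Real.log (1-δ) ≤ Real.log (1 - δ + δ * max (1 + t) 0) :=
        Real.log_le_log h1δ (by nlinarith)
      linarith
end

section
/- Under the hypotheses of the previous statement, for every λ ∈ ℝ^d, L_δ(λ) converges as δ ↑ 1 to L(λ) := −λᵀb + (1/2)·λᵀcλ + ∫ [λᵀh(x) − ln((1 + λᵀx)⁺)] F(dx), with the conventions ln(0⁺) = −∞ and the integral valued in (−∞, +∞]. -/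
open MeasureTheory Filter Set
open scoped RealInnerProductSpace ENNReal Topology

/-!
Write `v = ⟪lam, x⟫`, `h` for its truncation to `‖x‖ ≤ 1` and `w = v - h`, which is integrable.
The integrand of `L_δ` is `k_δ(v) - δ w` with `k_δ(t) = δ t - log (1 - δ + δ (1 + t)⁺)`
(`regLogGap δ`), and `|k_δ(t)| ≤ min(t², |t|) / (1 - δ)` is integrable against a Lévy measure.
If `F {1 + v ≤ 0} > 0`, then `k_δ(v) = δ v - log (1 - δ)` on that set and the integrals diverge.
Otherwise `k_δ(v) = ψ(δ v)` a.e., where `ψ(t) = t - log (1 + t) ≥ 0` (`logGap`), and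
`δ ↦ ψ(δ v)` increases, so monotone convergence gives `∫ ψ(δ v) ↑ ∫ ψ(v) ∈ [0, ∞]`; since
`h - log (1 + v) = ψ(v) - w` with `w` integrable, the limit is `∫ (h - log (1 + v))` in `(-∞, ∞]`.
-/

noncomputable def logGap (t : ℝ) : ℝ := t - Real.log (1 + t)

noncomputable def regLogGap (δ t : ℝ) : ℝ := δ * t - Real.log (1 - δ + δ * max (1 + t) 0)

lemma logGap_nonneg {t : ℝ} (ht : -1 < t) : 0 ≤ logGap t := by
  have := Real.log_le_sub_one_of_pos (x := 1 + t) (by linarith)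
  unfold logGap; linarith

lemma logGap_le_sq_div {ε t : ℝ} (hε : 0 < ε) (ht : ε ≤ 1 + t) : logGap t ≤ t ^ 2 / ε := by
  have h0 : 0 < 1 + t := hε.trans_le ht
  have := Real.one_sub_inv_le_log_of_pos h0
  calc logGap t ≤ t - (1 - (1 + t)⁻¹) := by unfold logGap; linarith
    _ = t ^ 2 / (1 + t) := by field_simp; ring
    _ ≤ t ^ 2 / ε := div_le_div_of_nonneg_left (sq_nonneg t) hε ht

lemma logGap_le_self {t : ℝ} (ht : 0 ≤ t) : logGap t ≤ t := by
  have := Real.log_nonneg (by linarith : (1 : ℝ) ≤ 1 + t)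
  unfold logGap; linarith

lemma logGap_mul_monotoneOn {u : ℝ} (hu : -1 < u) :
    MonotoneOn (fun δ => logGap (δ * u)) (Icc 0 1) := by
  rintro δ ⟨hδ0, hδ1⟩ δ' ⟨-, hδ'1⟩ hδδ'
  have pos : ∀ s ∈ Icc (0 : ℝ) 1, 0 < 1 + s * u := fun s ⟨hs0, hs1⟩ => by
    nlinarith [mul_nonneg hs0 (by linarith : 0 ≤ 1 + u)]
  have ha := pos δ ⟨hδ0, hδ1⟩
  have hb := pos δ' ⟨hδ0.trans hδδ', hδ'1⟩
  -- log(1 + δ'u) - log(1 + δu) ≤ (δ' - δ)u / (1 + δu) ≤ (δ' - δ)u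
  have key := Real.log_le_sub_one_of_pos (div_pos hb ha)
  rw [Real.log_div hb.ne' ha.ne', div_sub_one ha.ne'] at key
  have : (1 + δ' * u - (1 + δ * u)) / (1 + δ * u) ≤ δ' * u - δ * u := by
    rw [div_le_iff₀ ha]
    nlinarith [mul_nonneg (mul_nonneg hδ0 (sub_nonneg.2 hδδ')) (sq_nonneg u)]
  simp only [logGap]
  linarith

lemma regLogGap_of_neg_one_lt (δ : ℝ) {t : ℝ} (ht : -1 < t) :
    regLogGap δ t = logGap (δ * t) := by
  rw [regLogGap, logGap, max_eq_left (by linarith)]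
  ring_nf

lemma regLogGap_of_le_neg_one (δ : ℝ) {t : ℝ} (ht : 1 + t ≤ 0) :
    regLogGap δ t = δ * t - Real.log (1 - δ) := by
  rw [regLogGap, max_eq_right ht, mul_zero, add_zero]

lemma abs_regLogGap_le {δ : ℝ} (hδ : δ ∈ Ioo 0 1) (t : ℝ) :
    |regLogGap δ t| ≤ min (t ^ 2) |t| / (1 - δ) := by
  obtain ⟨hδ0, hδ1⟩ := hδ
  have hε : 0 < 1 - δ := by linarith
  rw [le_div_iff₀ hε, le_min_iff]
  rcases lt_or_ge (-1) t with ht | ht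
  · rw [regLogGap_of_neg_one_lt δ ht, abs_of_nonneg (logGap_nonneg (by nlinarith))]
    have hsq : logGap (δ * t) * (1 - δ) ≤ t ^ 2 := by
      have := logGap_le_sq_div hε (by nlinarith : 1 - δ ≤ 1 + δ * t)
      rw [← le_div_iff₀ hε]
      refine this.trans (div_le_div_of_nonneg_right ?_ hε.le)
      rw [mul_pow]
      exact mul_le_of_le_one_left (sq_nonneg t) (by nlinarith)
    refine ⟨hsq, ?_⟩
    rcases le_or_gt 0 t with ht0 | ht0
    · have := logGap_le_self (mul_nonneg hδ0.le ht0)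
      have := logGap_nonneg (t := δ * t) (by nlinarith)
      rw [abs_of_nonneg ht0]
      nlinarith
    · rw [abs_of_neg ht0]
      nlinarith
  · rw [regLogGap_of_le_neg_one δ (by linarith)]
    have hlog := Real.one_sub_inv_le_log_of_pos hε
    have hlog' : 0 ≤ -Real.log (1 - δ) := by
      have := Real.log_nonpos hε.le (by linarith : 1 - δ ≤ 1); linarith
    have hL : -Real.log (1 - δ) * (1 - δ) ≤ δ := by
      have := mul_le_mul_of_nonneg_right (by linarith : -Real.log (1 - δ) ≤ (1 - δ)⁻¹ - 1) hε.le
      rwa [sub_mul, inv_mul_cancel₀ hε.ne', one_mul, sub_sub_cancel] at this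
    have habs : |δ * t - Real.log (1 - δ)| * (1 - δ) ≤ |t| := by
      rw [abs_of_nonpos (by linarith : t ≤ 0)]
      have h1 : |δ * t - Real.log (1 - δ)| ≤ -δ * t + -Real.log (1 - δ) := by
        rw [abs_le]; constructor <;> nlinarith
      nlinarith [mul_le_mul_of_nonneg_right h1 hε.le,
        mul_nonneg (by linarith : 0 ≤ -t) (sq_nonneg (1 - δ))]
    exact ⟨habs.trans (by rw [abs_of_nonpos (by linarith : t ≤ 0)]; nlinarith), habs⟩

lemma neg_log_one_sub_le_regLogGap {δ : ℝ} (hδ : δ ∈ Ioo 0 1) {t : ℝ} (ht : 1 + t ≤ 0) :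
    -Real.log (1 - δ) - |t| ≤ regLogGap δ t := by
  rw [regLogGap_of_le_neg_one δ ht]
  nlinarith [neg_abs_le t, hδ.1, hδ.2, abs_nonneg t]

lemma mul_sub_log_eq_regLogGap_sub (δ h t : ℝ) :
    δ * h - Real.log (1 - δ + δ * max (1 + t) 0) = regLogGap δ t - δ * (t - h) := by
  unfold regLogGap; ring

lemma tendsto_neg_log_one_sub : Tendsto (fun δ : ℝ => -Real.log (1 - δ)) (𝓝[<] 1) atTop := by
  have : Tendsto (fun δ : ℝ => 1 - δ) (𝓝[<] 1) (𝓝[>] 0) :=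
    tendsto_nhdsWithin_of_tendsto_nhds_of_eventually_within _
      (((continuous_const.sub continuous_id).tendsto' 1 0 (sub_self 1)).mono_left
        nhdsWithin_le_nhds)
      (eventually_nhdsWithin_of_forall fun _ hδ => sub_pos.2 (mem_Iio.1 hδ))
  exact tendsto_neg_atBot_atTop.comp (Real.tendsto_log_nhdsGT_zero.comp this)

lemma measurable_regLogGap (δ : ℝ) : Measurable (regLogGap δ) := by
  unfold regLogGap; fun_prop

lemma ofReal_sub_add_ofReal {φ w : ℝ} (hφ : 0 ≤ φ) :
    ENNReal.ofReal (φ - w) + ENNReal.ofReal w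
      = ENNReal.ofReal (-(φ - w)) + ENNReal.ofReal φ + ENNReal.ofReal (-w) := by
  rcases le_total w 0 with hw | hw
  · rw [ENNReal.ofReal_of_nonpos hw, ENNReal.ofReal_of_nonpos (by linarith : -(φ - w) ≤ 0),
      add_zero, zero_add, ← ENNReal.ofReal_add hφ (by linarith)]
    ring_nf
  rcases le_total (φ - w) 0 with hg | hg
  · rw [ENNReal.ofReal_of_nonpos hg, ENNReal.ofReal_of_nonpos (by linarith : -w ≤ 0),
      zero_add, add_zero, ← ENNReal.ofReal_add (by linarith) hφ]
    ring_nf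
  · rw [ENNReal.ofReal_of_nonpos (by linarith : -(φ - w) ≤ 0),
      ENNReal.ofReal_of_nonpos (by linarith : -w ≤ 0), zero_add, add_zero,
      ← ENNReal.ofReal_add hg hw]
    ring_nf

section Measure

variable {α : Type*} [MeasurableSpace α] {F : Measure α}

lemma lintegral_ofReal_sub_lintegral_ofReal_neg {φ w : α → ℝ} (hφm : AEMeasurable φ F)
    (hφ : ∀ᵐ x ∂F, 0 ≤ φ x) (hw : Integrable w F) :
    ((∫⁻ x, ENNReal.ofReal (φ x - w x) ∂F : ℝ≥0∞) : EReal)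
        - ((∫⁻ x, ENNReal.ofReal (-(φ x - w x)) ∂F : ℝ≥0∞) : EReal)
      = ((∫⁻ x, ENNReal.ofReal (φ x) ∂F : ℝ≥0∞) : EReal) - ((∫ x, w x ∂F : ℝ) : EReal) := by
  set P := ∫⁻ x, ENNReal.ofReal (φ x - w x) ∂F
  set N := ∫⁻ x, ENNReal.ofReal (-(φ x - w x)) ∂F
  set Φ := ∫⁻ x, ENNReal.ofReal (φ x) ∂F
  set Wp := ∫⁻ x, ENNReal.ofReal (w x) ∂F
  set Wn := ∫⁻ x, ENNReal.ofReal (-w x) ∂F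
  have hwm := hw.aemeasurable
  have hWp : Wp ≠ ⊤ := hw.lintegral_lt_top.ne
  have hWn : Wn ≠ ⊤ := hw.neg.lintegral_lt_top.ne
  have hN : N ≠ ⊤ := ne_top_of_le_ne_top hWp <| lintegral_mono_ae <| hφ.mono fun x hx =>
    ENNReal.ofReal_le_ofReal (by linarith)
  have hsum : P + Wp = N + Φ + Wn :=
    calc P + Wp = ∫⁻ x, (ENNReal.ofReal (φ x - w x) + ENNReal.ofReal (w x)) ∂F :=
          (lintegral_add_right' _ hwm.ennreal_ofReal).symm
      _ = ∫⁻ x, (ENNReal.ofReal (-(φ x - w x)) + ENNReal.ofReal (φ x)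
            + ENNReal.ofReal (-w x)) ∂F :=
          lintegral_congr_ae (hφ.mono fun x hx => ofReal_sub_add_ofReal hx)
      _ = N + Φ + Wn := by
          rw [lintegral_add_right' _ (by fun_prop), lintegral_add_right' _ (by fun_prop)]
  rw [integral_eq_lintegral_pos_part_sub_lintegral_neg_part hw, ← EReal.coe_ennreal_toReal hN]
  by_cases hΦ : Φ = ⊤
  · have hP : P = ⊤ := by
      by_contra hP
      have := hsum ▸ ENNReal.add_ne_top.2 ⟨hP, hWp⟩
      simp [hΦ] at this
    rw [hP, hΦ, EReal.coe_ennreal_top, EReal.top_sub_coe, EReal.top_sub_coe]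
  · have hP : P ≠ ⊤ := ne_top_of_le_ne_top
      (ENNReal.add_ne_top.2 ⟨ENNReal.add_ne_top.2 ⟨hN, hΦ⟩, hWn⟩) (le_self_add.trans_eq hsum)
    have hsum' := congrArg ENNReal.toReal hsum
    rw [ENNReal.toReal_add hP hWp, ENNReal.toReal_add (ENNReal.add_ne_top.2 ⟨hN, hΦ⟩) hWn,
      ENNReal.toReal_add hN hΦ] at hsum'
    rw [← EReal.coe_ennreal_toReal hP, ← EReal.coe_ennreal_toReal hΦ, ← EReal.coe_sub,
      ← EReal.coe_sub]
    congr 1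
    linarith

lemma tendsto_lintegral_logGap_mul {v : α → ℝ} (hv : AEMeasurable v F)
    (hae : ∀ᵐ x ∂F, -1 < v x) :
    Tendsto (fun δ => ∫⁻ x, ENNReal.ofReal (logGap (δ * v x)) ∂F) (𝓝[<] 1)
      (𝓝 (∫⁻ x, ENNReal.ofReal (logGap (v x)) ∂F)) := by
  set m := fun δ : ℝ => ∫⁻ x, ENNReal.ofReal (logGap (δ * v x)) ∂F
  have hmono : MonotoneOn m (Icc 0 1) := fun a ha b hb hab => lintegral_mono_ae <|
    hae.mono fun x hx => ENNReal.ofReal_le_ofReal (logGap_mul_monotoneOn hx ha hb hab)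
  have hsup := (hmono.mono Ioo_subset_Icc_self).tendsto_nhdsWithin_Ioo_left
    (nonempty_Ioo.2 one_pos) (OrderTop.bddAbove _)
  -- the monotone convergence theorem identifies the one-sided limit along a sequence
  obtain ⟨u, hu_mono, hu_mem, hu_lim⟩ := exists_seq_strictMono_tendsto' (zero_lt_one' ℝ)
  have hseq : Tendsto (m ∘ u) atTop (𝓝 (m 1)) := by
    refine lintegral_tendsto_of_tendsto_of_monotone (fun n => by unfold logGap; fun_prop) ?_ ?_
    · filter_upwards [hae] with x hx
      exact fun a b hab => ENNReal.ofReal_le_ofReal <| logGap_mul_monotoneOn hx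
        (Ioo_subset_Icc_self (hu_mem a)) (Ioo_subset_Icc_self (hu_mem b)) (hu_mono.monotone hab)
    · filter_upwards [hae] with x hx
      have : 1 + 1 * v x ≠ 0 := by linarith
      have hcont : ContinuousAt (fun δ => logGap (δ * v x)) 1 := by
        unfold logGap; fun_prop (disch := assumption)
      exact (ENNReal.continuous_ofReal.continuousAt.comp hcont).tendsto.comp hu_lim
  have hu : Tendsto u atTop (𝓝[<] 1) :=
    tendsto_nhdsWithin_iff.2 ⟨hu_lim, Eventually.of_forall fun n => (hu_mem n).2⟩
  rw [tendsto_nhds_unique (hsup.comp hu) hseq] at hsup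
  simpa only [m, one_mul] using hsup

lemma integrable_regLogGap {v : α → ℝ} (hv : AEMeasurable v F)
    (hq : Integrable (fun x => min (v x ^ 2) |v x|) F) {δ : ℝ} (hδ : δ ∈ Ioo 0 1) :
    Integrable (fun x => regLogGap δ (v x)) F :=
  (hq.div_const (1 - δ)).mono'
    ((measurable_regLogGap δ).comp_aemeasurable hv).aestronglyMeasurable
    (Eventually.of_forall fun x => by
      simpa only [Real.norm_eq_abs] using abs_regLogGap_le hδ (v x))

variable {v h : α → ℝ}

theorem tendsto_integral_regularized_of_measure_eq_zero (hv : AEMeasurable v F)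
    (hq : Integrable (fun x => min (v x ^ 2) |v x|) F) (hw : Integrable (fun x => v x - h x) F)
    (hA : F {x | 1 + v x ≤ 0} = 0) :
    Tendsto (fun δ : ℝ =>
        ((∫ x, (δ * h x - Real.log (1 - δ + δ * max (1 + v x) 0)) ∂F : ℝ) : EReal))
      (𝓝[Ioo 0 1] 1)
      (𝓝 (((∫⁻ x, ENNReal.ofReal (h x - Real.log (1 + v x)) ∂F : ℝ≥0∞) : EReal)
        - ((∫⁻ x, ENNReal.ofReal (-(h x - Real.log (1 + v x))) ∂F : ℝ≥0∞) : EReal))) := by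
  have hae : ∀ᵐ x ∂F, -1 < v x :=
    measure_mono_null (fun x (hx : ¬ -1 < v x) => show 1 + v x ≤ 0 by linarith) hA
  set W := ∫ x, (v x - h x) ∂F
  have hint : ∀ δ ∈ Ioo (0 : ℝ) 1, Integrable (fun x => logGap (δ * v x)) F := fun δ hδ =>
    (integrable_regLogGap hv hq hδ).congr (hae.mono fun x hx => regLogGap_of_neg_one_lt δ hx)
  have hval : ∀ δ ∈ Ioo (0 : ℝ) 1,
      ((∫ x, (δ * h x - Real.log (1 - δ + δ * max (1 + v x) 0)) ∂F : ℝ) : EReal)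
        = ((∫⁻ x, ENNReal.ofReal (logGap (δ * v x)) ∂F : ℝ≥0∞) : EReal)
          + ((-(δ * W) : ℝ) : EReal) := by
    intro δ hδ
    have hnn : ∀ᵐ x ∂F, 0 ≤ logGap (δ * v x) :=
      hae.mono fun x hx => logGap_nonneg (by nlinarith [hδ.1, hδ.2])
    rw [← ofReal_integral_eq_lintegral_ofReal (hint δ hδ) hnn, EReal.coe_ennreal_ofReal,
      max_eq_left (integral_nonneg_of_ae hnn), ← EReal.coe_add]
    congr 1
    calc ∫ x, (δ * h x - Real.log (1 - δ + δ * max (1 + v x) 0)) ∂F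
        = ∫ x, (logGap (δ * v x) - δ * (v x - h x)) ∂F := integral_congr_ae <|
          hae.mono fun x hx => by
            dsimp only
            rw [mul_sub_log_eq_regLogGap_sub, regLogGap_of_neg_one_lt δ hx]
      _ = _ := by rw [integral_sub (hint δ hδ) (hw.const_mul δ), integral_const_mul]; ring
  have hlim : ((∫⁻ x, ENNReal.ofReal (h x - Real.log (1 + v x)) ∂F : ℝ≥0∞) : EReal)
        - ((∫⁻ x, ENNReal.ofReal (-(h x - Real.log (1 + v x))) ∂F : ℝ≥0∞) : EReal)
      = ((∫⁻ x, ENNReal.ofReal (logGap (v x)) ∂F : ℝ≥0∞) : EReal) + ((-W : ℝ) : EReal) := by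
    have hg : ∀ x, h x - Real.log (1 + v x) = logGap (v x) - (v x - h x) := fun x => by
      unfold logGap; ring
    simp_rw [hg]
    rw [lintegral_ofReal_sub_lintegral_ofReal_neg (by unfold logGap; fun_prop)
      (hae.mono fun x hx => logGap_nonneg hx) hw, sub_eq_add_neg, EReal.coe_neg]
  rw [hlim]
  refine Tendsto.congr' (eventually_nhdsWithin_of_forall fun δ hδ => (hval δ hδ).symm) ?_
  have hΦ := (continuous_coe_ennreal_ereal.tendsto _).comp
    ((tendsto_lintegral_logGap_mul hv hae).mono_left
      (nhdsWithin_mono _ (Ioo_subset_Iio_self (a := 0))))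
  have hW : Tendsto (fun δ : ℝ => ((-(δ * W) : ℝ) : EReal)) (𝓝[Ioo 0 1] 1)
      (𝓝 ((-W : ℝ) : EReal)) :=
    (continuous_coe_real_ereal.tendsto _).comp <|
      ((continuous_mul_const W).neg.tendsto' 1 (-W) (by simp)).mono_left nhdsWithin_le_nhds
  exact (EReal.continuousAt_add (.inr (EReal.coe_ne_bot _)) (.inr (EReal.coe_ne_top _))
    ).tendsto.comp (hΦ.prodMk_nhds hW)

theorem tendsto_integral_regularized_of_measure_ne_zero (hv : Measurable v)
    (hq : Integrable (fun x => min (v x ^ 2) |v x|) F) (hw : Integrable (fun x => v x - h x) F)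
    (hA : F {x | 1 + v x ≤ 0} ≠ 0) :
    Tendsto (fun δ : ℝ =>
        ((∫ x, (δ * h x - Real.log (1 - δ + δ * max (1 + v x) 0)) ∂F : ℝ) : EReal))
      (𝓝[Ioo 0 1] 1) (𝓝 ⊤) := by
  set A := {x | 1 + v x ≤ 0}
  have hAm : MeasurableSet A := measurableSet_le (by fun_prop) measurable_const
  have hAfin : F A < ⊤ := by
    refine (measure_mono fun x (hx : 1 + v x ≤ 0) => ?_).trans_lt
      (hq.measure_norm_ge_lt_top one_pos)
    have : 1 ≤ |v x| := by rw [abs_of_nonpos (by linarith)]; linarith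
    show 1 ≤ ‖min (v x ^ 2) |v x|‖
    rw [Real.norm_of_nonneg (le_min (sq_nonneg _) (abs_nonneg _))]
    exact le_min (by nlinarith [sq_abs (v x)]) this
  have hApos : 0 < F.real A := ENNReal.toReal_pos hA hAfin.ne
  set C := ∫ x, min (v x ^ 2) |v x| ∂F + ∫ x, |v x - h x| ∂F
  -- the integrand is at least `-log (1 - δ)` on `A`, up to integrable error terms
  have hlow : ∀ δ ∈ Ioo (0 : ℝ) 1, -Real.log (1 - δ) * F.real A + -C
      ≤ ∫ x, (δ * h x - Real.log (1 - δ + δ * max (1 + v x) 0)) ∂F := by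
    intro δ hδ
    have hI : Integrable (A.indicator fun _ => -Real.log (1 - δ)) F :=
      (integrable_indicator_iff hAm).2 (integrableOn_const hAfin.ne)
    have hf : Integrable (fun x => δ * h x - Real.log (1 - δ + δ * max (1 + v x) 0)) F :=
      ((integrable_regLogGap hv.aemeasurable hq hδ).sub (hw.const_mul δ)).congr
        (Eventually.of_forall fun x => (mul_sub_log_eq_regLogGap_sub δ (h x) (v x)).symm)
    calc -Real.log (1 - δ) * F.real A + -C
        = ∫ x, (A.indicator (fun _ => -Real.log (1 - δ)) x
            - min (v x ^ 2) |v x| - |v x - h x|) ∂F := by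
          rw [integral_sub (f := fun x => A.indicator (fun _ => -Real.log (1 - δ)) x
              - min (v x ^ 2) |v x|) (hI.sub hq) hw.abs, integral_sub hI hq,
            integral_indicator_const _ hAm, smul_eq_mul]
          ring
      _ ≤ _ := by
          refine integral_mono ((hI.sub hq).sub hw.abs) hf fun x => ?_
          have hδw : δ * (v x - h x) ≤ |v x - h x| :=
            (mul_le_mul_of_nonneg_left (le_abs_self _) hδ.1.le).trans
              (mul_le_of_le_one_left (abs_nonneg _) hδ.2.le)
          simp only [mul_sub_log_eq_regLogGap_sub]
          by_cases hx : x ∈ A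
          · have hx' : 1 + v x ≤ 0 := hx
            have : |v x| ≤ v x ^ 2 := by
              have : 1 ≤ |v x| := by rw [abs_of_nonpos (by linarith)]; linarith
              rw [← sq_abs]; nlinarith
            rw [indicator_of_mem hx, min_eq_right this]
            linarith [neg_log_one_sub_le_regLogGap hδ hx']
          · have hx' : -1 < v x := by simp only [A, mem_ofPred_eq, not_le] at hx; linarith
            rw [indicator_of_notMem hx, regLogGap_of_neg_one_lt δ hx']
            linarith [logGap_nonneg (t := δ * v x) (by nlinarith [hδ.1, hδ.2]),
              le_min (sq_nonneg (v x)) (abs_nonneg (v x))]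
  refine EReal.tendsto_coe_atTop.comp <| tendsto_atTop_mono' _
    (eventually_nhdsWithin_of_forall hlow) ?_
  exact tendsto_atTop_add_const_right _ _ <| Tendsto.atTop_mul_const hApos <|
    tendsto_neg_log_one_sub.mono_left (nhdsWithin_mono _ (Ioo_subset_Iio_self (a := 0)))

theorem tendsto_integral_regularized (hv : Measurable v)
    (hq : Integrable (fun x => min (v x ^ 2) |v x|) F) (hw : Integrable (fun x => v x - h x) F) :
    Tendsto (fun δ : ℝ =>
        ((∫ x, (δ * h x - Real.log (1 - δ + δ * max (1 + v x) 0)) ∂F : ℝ) : EReal))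
      (𝓝[Ioo 0 1] 1)
      (𝓝 (if F {x | 1 + v x ≤ 0} = 0 then
        ((∫⁻ x, ENNReal.ofReal (h x - Real.log (1 + v x)) ∂F : ℝ≥0∞) : EReal)
          - ((∫⁻ x, ENNReal.ofReal (-(h x - Real.log (1 + v x))) ∂F : ℝ≥0∞) : EReal)
        else ⊤)) := by
  split_ifs with hA
  · exact tendsto_integral_regularized_of_measure_eq_zero hv.aemeasurable hq hw hA
  · exact tendsto_integral_regularized_of_measure_ne_zero hv hq hw hA

end Measure

section InnerProductSpace

variable {E : Type*} [NormedAddCommGroup E] [MeasurableSpace E] [OpensMeasurableSpace E]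
  {F : Measure E}

lemma integrableOn_norm_of_lintegral_lt_top
    (hF2 : ∫⁻ x in {x | 1 < ‖x‖}, ENNReal.ofReal ‖x‖ ∂F < ⊤) :
    IntegrableOn (fun x => ‖x‖) {x | 1 < ‖x‖} F :=
  ⟨continuous_norm.aestronglyMeasurable,
    (hasFiniteIntegral_iff_ofReal (ae_of_all _ fun x => norm_nonneg x)).2 hF2⟩

variable [InnerProductSpace ℝ E]

lemma integrable_inner_sub_truncation (lam : E)
    (hF2 : ∫⁻ x in {x | 1 < ‖x‖}, ENNReal.ofReal ‖x‖ ∂F < ⊤) :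
    Integrable (fun x => ⟪lam, x⟫ - if ‖x‖ ≤ 1 then ⟪lam, x⟫ else 0) F := by
  have hon : IntegrableOn (fun x => ⟪lam, x⟫) {x | 1 < ‖x‖} F :=
    ((integrableOn_norm_of_lintegral_lt_top hF2).const_mul ‖lam‖).mono'
      (by fun_prop : Continuous fun x => ⟪lam, x⟫).aestronglyMeasurable
      (ae_of_all _ fun x => norm_inner_le_norm lam x)
  refine (hon.integrable_indicator (measurableSet_lt measurable_const measurable_norm)).congr
    (ae_of_all _ fun x => ?_)
  by_cases hx : ‖x‖ ≤ 1
  · simp [hx]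
  · simp [hx, indicator_of_mem (show x ∈ {x : E | 1 < ‖x‖} from not_le.1 hx)]

lemma integrable_min_sq_abs_inner (lam : E)
    (hF1 : ∫⁻ x, ENNReal.ofReal (min (‖x‖ ^ 2) 1) ∂F < ⊤)
    (hF2 : ∫⁻ x in {x | 1 < ‖x‖}, ENNReal.ofReal ‖x‖ ∂F < ⊤) :
    Integrable (fun x => min (⟪lam, x⟫ ^ 2) |⟪lam, x⟫|) F := by
  have hsmall : Integrable (fun x => min (‖x‖ ^ 2) 1) F :=
    ⟨by fun_prop, (hasFiniteIntegral_iff_ofReal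
      (ae_of_all _ fun x => le_min (sq_nonneg _) zero_le_one)).2 hF1⟩
  have hlarge : Integrable ({x | 1 < ‖x‖}.indicator fun x => ‖x‖) F :=
    (integrableOn_norm_of_lintegral_lt_top hF2).integrable_indicator
      (measurableSet_lt measurable_const measurable_norm)
  refine ((hsmall.const_mul (‖lam‖ ^ 2)).add (hlarge.const_mul ‖lam‖)).mono'
    (by fun_prop) (ae_of_all _ fun x => ?_)
  have hv : |⟪lam, x⟫| ≤ ‖lam‖ * ‖x‖ := abs_real_inner_le_norm lam x
  rw [Real.norm_of_nonneg (le_min (sq_nonneg _) (abs_nonneg _))]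
  simp only [Pi.add_apply]
  by_cases hx : 1 < ‖x‖
  · rw [indicator_of_mem (show x ∈ {x : E | 1 < ‖x‖} from hx)]
    have := mul_nonneg (sq_nonneg ‖lam‖) (le_min (sq_nonneg ‖x‖) zero_le_one)
    linarith [min_le_right (⟪lam, x⟫ ^ 2) |⟪lam, x⟫|]
  · rw [indicator_of_notMem (show x ∉ {x : E | 1 < ‖x‖} from hx), mul_zero, add_zero,
      min_eq_left (by nlinarith [norm_nonneg x] : ‖x‖ ^ 2 ≤ 1)]
    calc min (⟪lam, x⟫ ^ 2) |⟪lam, x⟫| ≤ |⟪lam, x⟫| ^ 2 := by rw [sq_abs]; exact min_le_left _ _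
      _ ≤ (‖lam‖ * ‖x‖) ^ 2 := pow_le_pow_left₀ (abs_nonneg _) hv 2
      _ = ‖lam‖ ^ 2 * ‖x‖ ^ 2 := mul_pow _ _ _

end InnerProductSpace

theorem stmt_10_general (d : ℕ)
    (b : EuclideanSpace ℝ (Fin d))
    (c : EuclideanSpace ℝ (Fin d) →L[ℝ] EuclideanSpace ℝ (Fin d))
    (F : Measure (EuclideanSpace ℝ (Fin d)))
    (hF1 : ∫⁻ x, ENNReal.ofReal (min (‖x‖ ^ 2) 1) ∂F < ⊤)
    (hF2 : ∫⁻ x in {x | 1 < ‖x‖}, ENNReal.ofReal ‖x‖ ∂F < ⊤)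
    -- the δ-regularized functional, δ ∈ (0,1)
    (Lδ : ℝ → EuclideanSpace ℝ (Fin d) → ℝ)
    (hLδ : ∀ δ ∈ Set.Ioo (0:ℝ) 1, ∀ lam, Lδ δ lam =
      -⟪lam, b⟫ + (1/2) * ⟪lam, c lam⟫ +
        ∫ x, (δ * (if ‖x‖ ≤ 1 then ⟪lam, x⟫ else 0)
          - Real.log (1 - δ + δ * max (1 + ⟪lam, x⟫) 0)) ∂F)
    -- the limit functional L, with values in (−∞, +∞] and the convention ln(0⁺) = −∞
    (g : EuclideanSpace ℝ (Fin d) → EuclideanSpace ℝ (Fin d) → ℝ)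
    (hg : ∀ lam x, g lam x =
      (if ‖x‖ ≤ 1 then ⟪lam, x⟫ else 0) - Real.log (1 + ⟪lam, x⟫))
    (L : EuclideanSpace ℝ (Fin d) → EReal)
    (hL : ∀ lam, L lam =
      if F {x | 1 + ⟪lam, x⟫ ≤ 0} = 0 then
        ((-⟪lam, b⟫ + (1/2) * ⟪lam, c lam⟫ : ℝ) : EReal)
          + ((∫⁻ x, ENNReal.ofReal (g lam x) ∂F : ℝ≥0∞) : EReal)
          - ((∫⁻ x, ENNReal.ofReal (-(g lam x)) ∂F : ℝ≥0∞) : EReal)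
      else (⊤ : EReal)) :
    ∀ lam, Tendsto (fun δ : ℝ => ((Lδ δ lam : ℝ) : EReal))
      (𝓝[Set.Ioo (0:ℝ) 1] 1) (𝓝 (L lam)) := by
  intro lam
  set K := -⟪lam, b⟫ + (1/2) * ⟪lam, c lam⟫
  have hint := tendsto_integral_regularized (by fun_prop)
    (integrable_min_sq_abs_inner lam hF1 hF2) (integrable_inner_sub_truncation lam hF2)
  have hsum := ((EReal.continuousAt_add (.inl (EReal.coe_ne_top K)) (.inl (EReal.coe_ne_bot K))
    ).tendsto.comp ((tendsto_const_nhds (x := (K : EReal))).prodMk_nhds hint)).congr'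
    (f₂ := fun δ => (Lδ δ lam : EReal))
    (eventually_nhdsWithin_of_forall fun δ hδ => by
      simp only [Function.comp, hLδ δ hδ lam, K, EReal.coe_add])
  rw [hL lam]
  simp only [hg]
  split_ifs at hsum ⊢
  · simpa only [sub_eq_add_neg, add_assoc] using hsum
  · simpa only [EReal.coe_add_top] using hsum

theorem stmt_10 (d : ℕ)
    (b : EuclideanSpace ℝ (Fin d))
    (c : EuclideanSpace ℝ (Fin d) →L[ℝ] EuclideanSpace ℝ (Fin d))
    (hcsym : ∀ x y, ⟪c x, y⟫ = ⟪x, c y⟫) (hcpos : ∀ x, 0 ≤ ⟪x, c x⟫)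
    (F : Measure (EuclideanSpace ℝ (Fin d))) [SigmaFinite F]
    (hF0 : F {0} = 0)
    (hF1 : ∫⁻ x, ENNReal.ofReal (min (‖x‖ ^ 2) 1) ∂F < ⊤)
    (hF2 : ∫⁻ x in {x | 1 < ‖x‖}, ENNReal.ofReal ‖x‖ ∂F < ⊤)
    -- the δ-regularized functional, δ ∈ (0,1)
    (Lδ : ℝ → EuclideanSpace ℝ (Fin d) → ℝ)
    (hLδ : ∀ δ ∈ Set.Ioo (0:ℝ) 1, ∀ lam, Lδ δ lam =
      -⟪lam, b⟫ + (1/2) * ⟪lam, c lam⟫ +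
        ∫ x, (δ * (if ‖x‖ ≤ 1 then ⟪lam, x⟫ else 0)
          - Real.log (1 - δ + δ * max (1 + ⟪lam, x⟫) 0)) ∂F)
    -- the limit functional L, with values in (−∞, +∞] and the convention ln(0⁺) = −∞
    (g : EuclideanSpace ℝ (Fin d) → EuclideanSpace ℝ (Fin d) → ℝ)
    (hg : ∀ lam x, g lam x =
      (if ‖x‖ ≤ 1 then ⟪lam, x⟫ else 0) - Real.log (1 + ⟪lam, x⟫))
    (L : EuclideanSpace ℝ (Fin d) → EReal)
    (hL : ∀ lam, L lam =
      if F {x | 1 + ⟪lam, x⟫ ≤ 0} = 0 then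
        ((-⟪lam, b⟫ + (1/2) * ⟪lam, c lam⟫ : ℝ) : EReal)
          + ((∫⁻ x, ENNReal.ofReal (g lam x) ∂F : ℝ≥0∞) : EReal)
          - ((∫⁻ x, ENNReal.ofReal (-(g lam x)) ∂F : ℝ≥0∞) : EReal)
      else (⊤ : EReal)) :
    ∀ lam, Tendsto (fun δ : ℝ => ((Lδ δ lam : ℝ) : EReal))
      (𝓝[Set.Ioo (0:ℝ) 1] 1) (𝓝 (L lam)) :=
  stmt_10_general d b c F hF1 hF2 Lδ hLδ g hg L hL
end

section
/- Let b ∈ ℝ^d, c a symmetric positive semidefinite d×d matrix, and F a measure on ℝ^d \ {0} with ∫(|x|²∧1)F(dx) < ∞ and ∫_{|x|>1}|x|F(dx) < ∞. Define L(λ) = −λᵀb + (1/2)λᵀcλ + ∫[λᵀh(x) − ln((1+λᵀx)⁺)]F(dx) with values in (−∞, +∞] and ln(0⁺) = −∞. Then L is a proper convex function with L(0) = 0, and for every λ in the effective domain of L one has 1 + λᵀx > 0 for F-almost every x. -/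
open MeasureTheory
open scoped RealInnerProductSpace ENNReal

lemma aux_coe_fin {A : ℝ≥0∞} (hA : A ≠ ⊤) : (A : EReal) = ((A.toReal : ℝ) : EReal) := by
  conv_lhs => rw [← ENNReal.ofReal_toReal hA]
  rw [EReal.coe_ennreal_ofReal, max_eq_left ENNReal.toReal_nonneg]

lemma aux_mul_ne_bot {β : ℝ} (hβ : 0 < β) {y : EReal} (hy : y ≠ ⊥) : (β:EReal) * y ≠ ⊥ := by
  induction y with
  | bot => exact absurd rfl hy
  | coe r => rw [← EReal.coe_mul]; exact EReal.coe_ne_bot _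
  | top => rw [EReal.coe_mul_top_of_pos hβ]; exact top_ne_bot

theorem stmt_11 (d : ℕ)
    (b : EuclideanSpace ℝ (Fin d))
    (c : EuclideanSpace ℝ (Fin d) →L[ℝ] EuclideanSpace ℝ (Fin d))
    (hcsym : ∀ x y, ⟪c x, y⟫ = ⟪x, c y⟫) (hcpos : ∀ x, 0 ≤ ⟪x, c x⟫)
    (F : Measure (EuclideanSpace ℝ (Fin d))) [SigmaFinite F]
    (hF0 : F {0} = 0)
    (hF1 : ∫⁻ x, ENNReal.ofReal (min (‖x‖ ^ 2) 1) ∂F < ⊤)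
    (hF2 : ∫⁻ x in {x | 1 < ‖x‖}, ENNReal.ofReal ‖x‖ ∂F < ⊤)
    (g : EuclideanSpace ℝ (Fin d) → EuclideanSpace ℝ (Fin d) → ℝ)
    (hg : ∀ lam x, g lam x =
      (if ‖x‖ ≤ 1 then ⟪lam, x⟫ else 0) - Real.log (1 + ⟪lam, x⟫))
    (L : EuclideanSpace ℝ (Fin d) → EReal)
    (hL : ∀ lam, L lam =
      if F {x | 1 + ⟪lam, x⟫ ≤ 0} = 0 then
        ((-⟪lam, b⟫ + (1/2) * ⟪lam, c lam⟫ : ℝ) : EReal)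
          + ((∫⁻ x, ENNReal.ofReal (g lam x) ∂F : ℝ≥0∞) : EReal)
          - ((∫⁻ x, ENNReal.ofReal (-(g lam x)) ∂F : ℝ≥0∞) : EReal)
      else (⊤ : EReal)) :
    -- L is proper: never −∞ ...
    (∀ lam, L lam ≠ (⊥ : EReal)) ∧
    -- ... with nonempty effective domain, since L(0) = 0
    L 0 = 0 ∧
    -- L is convex
    (∀ lam μ : EuclideanSpace ℝ (Fin d), ∀ a β : ℝ, 0 ≤ a → 0 ≤ β → a + β = 1 →
      L (a • lam + β • μ) ≤ ((a : ℝ) : EReal) * L lam + ((β : ℝ) : EReal) * L μ) ∧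
    -- on the effective domain, 1 + λᵀx > 0 for F-a.e. x
    (∀ lam, L lam < (⊤ : EReal) → ∀ᵐ x ∂F, 0 < 1 + ⟪lam, x⟫) := by
  have hinner : ∀ lam : EuclideanSpace ℝ (Fin d),
      Measurable fun x : EuclideanSpace ℝ (Fin d) => ⟪lam, x⟫ := fun lam =>
    (continuous_const.inner continuous_id).measurable
  have hmg : ∀ lam, Measurable (g lam) := by
    intro lam
    have h1 : g lam = fun x => (if ‖x‖ ≤ 1 then ⟪lam, x⟫ else 0) - Real.log (1 + ⟪lam, x⟫) :=
      funext (hg lam)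
    rw [h1]
    exact (Measurable.ite (measurableSet_le measurable_norm measurable_const)
      (hinner lam) measurable_const).sub
      (Real.measurable_log.comp (measurable_const.add (hinner lam)))
  -- a.e. positivity from null condition
  have hae : ∀ lam, F {x | 1 + ⟪lam, x⟫ ≤ 0} = 0 → ∀ᵐ x ∂F, 0 < 1 + ⟪lam, x⟫ := by
    intro lam h
    rw [ae_iff]
    simpa only [not_lt] using h
  -- negative part is finite on the domain
  have hnegfin : ∀ lam, F {x | 1 + ⟪lam, x⟫ ≤ 0} = 0 →
      ∫⁻ x, ENNReal.ofReal (-(g lam x)) ∂F ≠ ⊤ := by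
    intro lam h
    have hb : ∀ᵐ x ∂F, ENNReal.ofReal (-(g lam x)) ≤
        {x : EuclideanSpace ℝ (Fin d) | 1 < ‖x‖}.indicator
          (fun x => ENNReal.ofReal (‖lam‖ * ‖x‖)) x := by
      filter_upwards [hae lam h] with x hx
      rw [hg]
      by_cases hx1 : ‖x‖ ≤ 1
      · simp only [hx1, if_true]
        rw [Set.indicator_of_notMem (by simpa using hx1)]
        have hlog := Real.log_le_sub_one_of_pos hx
        exact le_of_eq (ENNReal.ofReal_eq_zero.mpr (by linarith))
      · simp only [hx1, if_false]
        rw [Set.indicator_of_mem (by simpa using not_le.mp hx1)]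
        apply ENNReal.ofReal_le_ofReal
        have h1 := Real.log_le_sub_one_of_pos hx
        have h2 : ⟪lam, x⟫ ≤ ‖lam‖ * ‖x‖ := real_inner_le_norm lam x
        linarith
    have hcalc : ∫⁻ x, ENNReal.ofReal (-(g lam x)) ∂F ≤
        ENNReal.ofReal ‖lam‖ * ∫⁻ x in {x | 1 < ‖x‖}, ENNReal.ofReal ‖x‖ ∂F := by
      calc ∫⁻ x, ENNReal.ofReal (-(g lam x)) ∂F
          ≤ ∫⁻ x, {x : EuclideanSpace ℝ (Fin d) | 1 < ‖x‖}.indicator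
              (fun x => ENNReal.ofReal (‖lam‖ * ‖x‖)) x ∂F := lintegral_mono_ae hb
        _ = ∫⁻ x in {x | 1 < ‖x‖}, ENNReal.ofReal (‖lam‖ * ‖x‖) ∂F :=
            lintegral_indicator (measurableSet_lt measurable_const measurable_norm) _
        _ = ∫⁻ x in {x | 1 < ‖x‖}, ENNReal.ofReal ‖lam‖ * ENNReal.ofReal ‖x‖ ∂F := by
            simp_rw [ENNReal.ofReal_mul (norm_nonneg lam)]
        _ = ENNReal.ofReal ‖lam‖ * ∫⁻ x in {x | 1 < ‖x‖}, ENNReal.ofReal ‖x‖ ∂F :=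
            lintegral_const_mul _ measurable_norm.ennreal_ofReal
    exact (hcalc.trans_lt (ENNReal.mul_lt_top ENNReal.ofReal_lt_top hF2)).ne
  -- integrability and real formula for L on points where both parts are finite
  have hform : ∀ lam, F {x | 1 + ⟪lam, x⟫ ≤ 0} = 0 →
      ∫⁻ x, ENNReal.ofReal (g lam x) ∂F ≠ ⊤ →
      Integrable (g lam) F ∧
        L lam = ((-⟪lam, b⟫ + (1/2) * ⟪lam, c lam⟫ + ∫ x, g lam x ∂F : ℝ) : EReal) := by
    intro lam h hpos
    have hneg := hnegfin lam h
    have hint : Integrable (g lam) F := by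
      refine ⟨(hmg lam).aestronglyMeasurable, ?_⟩
      rw [hasFiniteIntegral_iff_norm]
      have hle : ∫⁻ x, ENNReal.ofReal ‖g lam x‖ ∂F ≤
          ∫⁻ x, (ENNReal.ofReal (g lam x) + ENNReal.ofReal (-(g lam x))) ∂F := by
        apply lintegral_mono
        intro x
        show ENNReal.ofReal ‖g lam x‖ ≤ ENNReal.ofReal (g lam x) + ENNReal.ofReal (-(g lam x))
        rw [Real.norm_eq_abs, abs_eq_max_neg]
        rcases le_total (g lam x) (-(g lam x)) with h1 | h1
        · rw [max_eq_right h1]; exact le_add_self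
        · rw [max_eq_left h1]; exact le_self_add
      rw [lintegral_add_left (hmg lam).ennreal_ofReal] at hle
      exact hle.trans_lt (ENNReal.add_lt_top.mpr ⟨hpos.lt_top, hneg.lt_top⟩)
    refine ⟨hint, ?_⟩
    have hrepr := integral_eq_lintegral_pos_part_sub_lintegral_neg_part hint
    rw [hL, if_pos h, aux_coe_fin hpos, aux_coe_fin hneg, ← EReal.coe_add, ← EReal.coe_sub]
    congr 1
    rw [hrepr]
    ring
  -- properness
  have hprop : ∀ lam, L lam ≠ (⊥ : EReal) := by
    intro lam
    rw [hL]
    split_ifs with h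
    · have hneg := hnegfin lam h
      intro hcontra
      rw [sub_eq_add_neg] at hcontra
      rcases EReal.add_eq_bot_iff.mp hcontra with h1 | h2
      · rcases EReal.add_eq_bot_iff.mp h1 with h3 | h4
        · exact EReal.coe_ne_bot _ h3
        · exact EReal.coe_ennreal_ne_bot _ h4
      · rw [EReal.neg_eq_bot_iff, EReal.coe_ennreal_eq_top_iff] at h2
        exact hneg h2
    · exact top_ne_bot
  -- effective domain condition
  have hdom : ∀ lam, L lam < ⊤ → F {x | 1 + ⟪lam, x⟫ ≤ 0} = 0 := by
    intro lam hlt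
    by_contra h
    rw [hL, if_neg h] at hlt
    exact lt_irrefl _ hlt
  refine ⟨hprop, ?_, ?_, fun lam hlt => hae lam (hdom lam hlt)⟩
  · -- L 0 = 0
    have hset0 : {x : EuclideanSpace ℝ (Fin d) | 1 + ⟪(0 : EuclideanSpace ℝ (Fin d)), x⟫ ≤ 0}
        = ∅ := by
      ext x
      simp only [inner_zero_left, add_zero, Set.mem_setOf_eq, Set.mem_empty_iff_false,
        iff_false]
      norm_num
    have hg0 : ∀ x, g 0 x = 0 := by
      intro x
      rw [hg]
      simp [inner_zero_left]
    rw [hL, if_pos (by rw [hset0]; exact measure_empty)]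
    simp_rw [hg0]
    simp [inner_zero_left]
  · -- convexity
    intro lam μ a β ha hb hab
    rcases eq_or_lt_of_le ha with ha0 | ha0
    · have hb1 : β = 1 := by linarith
      subst hb1
      rw [← ha0, zero_smul, one_smul, zero_add, EReal.coe_zero, EReal.zero_mul,
        EReal.coe_one, one_mul, zero_add]
    · rcases eq_or_lt_of_le hb with hb0 | hb0
      · have ha1 : a = 1 := by linarith
        subst ha1
        rw [← hb0, zero_smul, one_smul, add_zero, EReal.coe_zero, EReal.zero_mul,
          EReal.coe_one, one_mul, add_zero]
      · by_cases hLl : L lam = ⊤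
        · rw [hLl, EReal.coe_mul_top_of_pos ha0,
            EReal.top_add_of_ne_bot (aux_mul_ne_bot hb0 (hprop μ))]
          exact le_top
        by_cases hLm : L μ = ⊤
        · rw [hLm, EReal.coe_mul_top_of_pos hb0,
            EReal.add_top_of_ne_bot (aux_mul_ne_bot ha0 (hprop lam))]
          exact le_top
        -- main case
        have hcl := hdom lam (lt_top_iff_ne_top.mpr hLl)
        have hcm := hdom μ (lt_top_iff_ne_top.mpr hLm)
        -- positive parts finite
        have hposfin : ∀ ν, F {x | 1 + ⟪ν, x⟫ ≤ 0} = 0 → L ν ≠ ⊤ →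
            ∫⁻ x, ENNReal.ofReal (g ν x) ∂F ≠ ⊤ := by
          intro ν hcn hLn
          by_contra hp
          apply hLn
          rw [hL, if_pos hcn, hp, EReal.coe_ennreal_top,
            EReal.add_top_of_ne_bot (EReal.coe_ne_bot _), sub_eq_add_neg,
            EReal.top_add_of_ne_bot]
          rw [ne_eq, EReal.neg_eq_bot_iff, EReal.coe_ennreal_eq_top_iff]
          exact hnegfin ν hcn
        have hpl := hposfin lam hcl hLl
        have hpm := hposfin μ hcm hLm
        obtain ⟨hintl, hLl'⟩ := hform lam hcl hpl
        obtain ⟨hintm, hLm'⟩ := hform μ hcm hpm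
        set ν := a • lam + β • μ with hν
        have hinner_expand : ∀ x, ⟪ν, x⟫ = a * ⟪lam, x⟫ + β * ⟪μ, x⟫ := by
          intro x
          simp only [hν, inner_add_left, real_inner_smul_left]
        -- domain condition for ν
        have hcn : F {x | 1 + ⟪ν, x⟫ ≤ 0} = 0 := by
          refine measure_mono_null ?_ (measure_union_null hcl hcm)
          intro x hx
          · 
            by_contra hcon
            simp only [Set.mem_union, Set.mem_setOf_eq, not_or, not_le] at hcon
            obtain ⟨h1, h2⟩ := hcon
            simp only [Set.mem_setOf_eq, hinner_expand] at hx
            nlinarith [mul_pos ha0 h1, mul_pos hb0 h2]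
        -- pointwise convexity a.e.
        have hptwise : ∀ᵐ x ∂F, g ν x ≤ a * g lam x + β * g μ x := by
          filter_upwards [hae lam hcl, hae μ hcm] with x h1 h2
          rw [hg, hg, hg]
          have harg : a * (1 + ⟪lam, x⟫) + β * (1 + ⟪μ, x⟫) = 1 + ⟪ν, x⟫ := by
            rw [hinner_expand]
            linear_combination hab
          have hlog : a * Real.log (1 + ⟪lam, x⟫) + β * Real.log (1 + ⟪μ, x⟫) ≤
              Real.log (1 + ⟪ν, x⟫) := by
            have hcc := (strictConcaveOn_log_Ioi.concaveOn).2 (Set.mem_Ioi.mpr h1)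
              (Set.mem_Ioi.mpr h2) ha hb hab
            simp only [smul_eq_mul] at hcc
            rwa [harg] at hcc
          have hind : (if ‖x‖ ≤ 1 then ⟪ν, x⟫ else 0) =
              a * (if ‖x‖ ≤ 1 then ⟪lam, x⟫ else 0) + β * (if ‖x‖ ≤ 1 then ⟪μ, x⟫ else 0) := by
            split_ifs
            · exact hinner_expand x
            · ring
          rw [hind]
          nlinarith [hlog]
        -- positive part of ν finite
        have hpn : ∫⁻ x, ENNReal.ofReal (g ν x) ∂F ≠ ⊤ := by
          have hle : ∫⁻ x, ENNReal.ofReal (g ν x) ∂F ≤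
              ∫⁻ x, (ENNReal.ofReal (a * g lam x) + ENNReal.ofReal (β * g μ x)) ∂F := by
            apply lintegral_mono_ae
            filter_upwards [hptwise] with x hx
            exact (ENNReal.ofReal_le_ofReal hx).trans ENNReal.ofReal_add_le
          rw [lintegral_add_left ((hmg lam).const_mul a).ennreal_ofReal] at hle
          apply ne_top_of_le_ne_top _ hle
          apply ENNReal.add_ne_top.mpr
          constructor
          · simp_rw [ENNReal.ofReal_mul ha]
            rw [lintegral_const_mul _ (hmg lam).ennreal_ofReal]
            exact (ENNReal.mul_lt_top ENNReal.ofReal_lt_top hpl.lt_top).ne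
          · simp_rw [ENNReal.ofReal_mul hb]
            rw [lintegral_const_mul _ (hmg μ).ennreal_ofReal]
            exact (ENNReal.mul_lt_top ENNReal.ofReal_lt_top hpm.lt_top).ne
        obtain ⟨hintn, hLn'⟩ := hform ν hcn hpn
        -- integral inequality
        have hI : ∫ x, g ν x ∂F ≤ a * ∫ x, g lam x ∂F + β * ∫ x, g μ x ∂F := by
          have hcomb : Integrable (fun x => a * g lam x + β * g μ x) F :=
            (hintl.const_mul a).add (hintm.const_mul β)
          calc ∫ x, g ν x ∂F ≤ ∫ x, (a * g lam x + β * g μ x) ∂F :=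
                integral_mono_ae hintn hcomb hptwise
            _ = a * ∫ x, g lam x ∂F + β * ∫ x, g μ x ∂F := by
                rw [integral_add (hintl.const_mul a) (hintm.const_mul β),
                  integral_const_mul, integral_const_mul]
        -- quadratic inequality
        have hquad : ⟪ν, c ν⟫ ≤ a * ⟪lam, c lam⟫ + β * ⟪μ, c μ⟫ := by
          have hPQ := hcpos (lam - μ)
          have hsym : ⟪μ, c lam⟫ = ⟪lam, c μ⟫ := by
            rw [← hcsym, real_inner_comm]
          simp only [map_sub, inner_sub_left, inner_sub_right, hsym] at hPQ
          have hexp : ⟪ν, c ν⟫ = a * a * ⟪lam, c lam⟫ + 2 * (a * β) * ⟪lam, c μ⟫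
              + β * β * ⟪μ, c μ⟫ := by
            simp only [hν, map_add, _root_.map_smul, inner_add_left, inner_add_right,
              real_inner_smul_left, real_inner_smul_right, hsym]
            ring
          have key : a * ⟪lam, c lam⟫ + β * ⟪μ, c μ⟫ -
              (a * a * ⟪lam, c lam⟫ + 2 * (a * β) * ⟪lam, c μ⟫ + β * β * ⟪μ, c μ⟫) =
              a * β * (⟪lam, c lam⟫ - 2 * ⟪lam, c μ⟫ + ⟪μ, c μ⟫) := by
            linear_combination (-(a * ⟪lam, c lam⟫ + β * ⟪μ, c μ⟫)) * hab
          have h2 : 0 ≤ ⟪lam, c lam⟫ - 2 * ⟪lam, c μ⟫ + ⟪μ, c μ⟫ := by linarith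
          have h3 := mul_nonneg (mul_nonneg ha hb) h2
          rw [hexp]
          nlinarith [key, h3]
        -- linear part
        have hlin : ⟪ν, b⟫ = a * ⟪lam, b⟫ + β * ⟪μ, b⟫ := hinner_expand b
        rw [hLl', hLm', hLn', ← EReal.coe_mul, ← EReal.coe_mul, ← EReal.coe_add,
          EReal.coe_le_coe_iff]
        nlinarith [hI, hquad, hlin]
end

section
/- With L as above, the function L is lower semicontinuous (closed) on ℝ^d. -/
open MeasureTheory
open scoped RealInnerProductSpace ENNReal

/-!
Read `ln 0 = -∞`, so that the integrand `G(λ, x) = λᵀh(x) − ln((1 + λᵀx)⁺)` is `+∞` where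
`1 + λᵀx ≤ 0`. For fixed `x` it is then a continuous `EReal`-valued function of `λ`, and
`L = C + ∫ G⁺ dF − ∫ G⁻ dF` with `C` the continuous quadratic part. (Where `F(1 + λᵀx ≤ 0) > 0`
both sides are `+∞`; elsewhere the junk values of `Real.log` live on an `F`-null set.)
`∫ G⁺ dF` is lower semicontinuous by Fatou's lemma. Since `ln(1 + t) ≤ t`, `G⁻` vanishes on
`{|x| ≤ 1}` and is at most `|λ| |x|` on `{|x| > 1}`, so `∫ G⁻ dF` is finite and, by dominated
convergence, continuous.
-/

open Filter Topology

section Semicontinuity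

variable {X α : Type*} [TopologicalSpace X] [FirstCountableTopology X] [MeasurableSpace α]
  {μ : Measure α} {f : X → α → ℝ≥0∞}

theorem lowerSemicontinuous_lintegral (hf_meas : ∀ x, Measurable (f x))
    (hf : ∀ a, LowerSemicontinuous fun x => f x a) :
    LowerSemicontinuous fun x => ∫⁻ a, f x a ∂μ := by
  refine lowerSemicontinuous_iff_le_liminf.2 fun x => ?_
  calc ∫⁻ a, f x a ∂μ ≤ ∫⁻ a, liminf (fun y => f y a) (𝓝 x) ∂μ :=
        lintegral_mono fun a => (hf a).le_liminf x
    _ ≤ liminf (fun y => ∫⁻ a, f y a ∂μ) (𝓝 x) := lintegral_liminf_le hf_meas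

theorem continuous_lintegral_of_locally_dominated (hf_meas : ∀ x, Measurable (f x))
    (hf : ∀ a, Continuous fun x => f x a)
    (hdom : ∀ x, ∃ D : α → ℝ≥0∞, ∫⁻ a, D a ∂μ ≠ ∞ ∧ ∀ᶠ y in 𝓝 x, ∀ a, f y a ≤ D a) :
    Continuous fun x => ∫⁻ a, f x a ∂μ := by
  refine continuous_iff_continuousAt.2 fun x => ?_
  obtain ⟨D, hD, hfD⟩ := hdom x
  exact tendsto_lintegral_filter_of_dominated_convergence D (.of_forall hf_meas)
    (hfD.mono fun y hy => .of_forall hy) hD (.of_forall fun a => (hf a).continuousAt)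

end Semicontinuity

section ERealSum

variable {X : Type*} [TopologicalSpace X] {u : X → ℝ}

theorem Continuous.coe_add_ereal {v : X → EReal} (hu : Continuous u) (hv : Continuous v) :
    Continuous fun x => (u x : EReal) + v x :=
  continuous_iff_continuousAt.2 fun _ =>
    (EReal.continuousAt_add (Or.inl (EReal.coe_ne_top _)) (Or.inl (EReal.coe_ne_bot _))).comp
      ((continuous_coe_real_ereal.comp hu).prodMk hv).continuousAt

theorem LowerSemicontinuous.coe_add_coe_ennreal {m : X → ℝ≥0∞} (hu : Continuous u)
    (hm : LowerSemicontinuous m) : LowerSemicontinuous fun x => (u x : EReal) + (m x : EReal) :=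
  (continuous_coe_real_ereal.comp hu).lowerSemicontinuous.add'
    (continuous_coe_ennreal_ereal.comp_lowerSemicontinuous hm
      fun _ _ => EReal.coe_ennreal_le_coe_ennreal_iff.2)
    fun _ => EReal.continuousAt_add (Or.inl (EReal.coe_ne_top _)) (Or.inl (EReal.coe_ne_bot _))

end ERealSum

theorem continuous_coe_sub_log_ofReal_one_add :
    Continuous fun p : ℝ × ℝ => (p.1 : EReal) - ENNReal.log (ENNReal.ofReal (1 + p.2)) :=
  continuous_fst.coe_add_ereal <| continuous_neg.comp <|
    ENNReal.continuous_log.comp (ENNReal.continuous_ofReal.comp (by fun_prop))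

section LogIntegrand

variable {E : Type*} [NormedAddCommGroup E] [InnerProductSpace ℝ E]

/-- The paper's `ln((1 + λᵀx)⁺)`, with `ln 0 = -∞`, is `ENNReal.log (ENNReal.ofReal (1 + ⟪λ, x⟫))`. -/
noncomputable def logIntegrand (lam x : E) : EReal :=
  ((if ‖x‖ ≤ 1 then ⟪lam, x⟫ else 0 : ℝ) : EReal) - ENNReal.log (ENNReal.ofReal (1 + ⟪lam, x⟫))

theorem continuous_logIntegrand (x : E) : Continuous fun lam => logIntegrand lam x := by
  refine continuous_coe_sub_log_ofReal_one_add.comp (Continuous.prodMk ?_ (by fun_prop))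
  exact continuous_if_const _ (fun _ => by fun_prop) fun _ => continuous_const

theorem measurable_logIntegrand [MeasurableSpace E] [OpensMeasurableSpace E] (lam : E) :
    Measurable (logIntegrand lam) :=
  continuous_coe_sub_log_ofReal_one_add.measurable.comp <|
    (Measurable.ite (measurableSet_le (by fun_prop) measurable_const) (by fun_prop)
      measurable_const).prodMk (by fun_prop)

theorem logIntegrand_of_pos {lam x : E} (h : 0 < 1 + ⟪lam, x⟫) :
    logIntegrand lam x = ((if ‖x‖ ≤ 1 then ⟪lam, x⟫ else 0) - Real.log (1 + ⟪lam, x⟫) : ℝ) := by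
  rw [logIntegrand, ENNReal.log_ofReal_of_pos h, EReal.coe_sub]

theorem logIntegrand_of_nonpos {lam x : E} (h : 1 + ⟪lam, x⟫ ≤ 0) : logIntegrand lam x = ⊤ := by
  rw [logIntegrand, ENNReal.ofReal_eq_zero.2 h, ENNReal.log_zero, EReal.coe_sub_bot]

theorem toENNReal_neg_logIntegrand_le (lam x : E) :
    (-logIntegrand lam x).toENNReal ≤
      {x : E | 1 < ‖x‖}.indicator (fun x => ENNReal.ofReal (‖lam‖ * ‖x‖)) x := by
  rcases le_or_gt (1 + ⟪lam, x⟫) 0 with hbad | hgood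
  · simp [logIntegrand_of_nonpos hbad]
  have hlog : Real.log (1 + ⟪lam, x⟫) ≤ ⟪lam, x⟫ := by
    linarith [Real.log_le_sub_one_of_pos hgood]
  rw [logIntegrand_of_pos hgood, ← EReal.coe_neg, EReal.real_coe_toENNReal]
  by_cases hx : ‖x‖ ≤ 1
  · rw [if_pos hx, ENNReal.ofReal_eq_zero.2 (by linarith)]
    exact bot_le
  · rw [if_neg hx, Set.indicator_of_mem (show x ∈ {x : E | 1 < ‖x‖} from not_le.1 hx)]
    gcongr
    linarith [real_inner_le_norm lam x]

end LogIntegrand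

section NormIndicator

variable {E : Type*} [NormedAddCommGroup E] [MeasurableSpace E] [OpensMeasurableSpace E]
  {μ : Measure E}

theorem lintegral_indicator_ofReal_mul_norm_ne_top
    (hμ : ∫⁻ x in {x | 1 < ‖x‖}, ENNReal.ofReal ‖x‖ ∂μ < ⊤) (r : ℝ) :
    ∫⁻ x, {x : E | 1 < ‖x‖}.indicator (fun x => ENNReal.ofReal (r * ‖x‖)) x ∂μ ≠ ∞ := by
  have hr (x : E) : ENNReal.ofReal (r * ‖x‖) = ENNReal.ofReal r * ENNReal.ofReal ‖x‖ :=
    ENNReal.ofReal_mul' (norm_nonneg x)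
  rw [lintegral_indicator (measurableSet_lt measurable_const measurable_norm)]
  simp_rw [hr]
  rw [lintegral_const_mul' _ _ ENNReal.ofReal_ne_top]
  exact ENNReal.mul_ne_top ENNReal.ofReal_ne_top hμ.ne

end NormIndicator

section Integrals

variable {E : Type*} [NormedAddCommGroup E] [InnerProductSpace ℝ E] [MeasurableSpace E]
  [OpensMeasurableSpace E] {μ : Measure E}

theorem lintegral_toENNReal_neg_logIntegrand_ne_top
    (hμ : ∫⁻ x in {x | 1 < ‖x‖}, ENNReal.ofReal ‖x‖ ∂μ < ⊤) (lam : E) :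
    ∫⁻ x, (-logIntegrand lam x).toENNReal ∂μ ≠ ∞ :=
  ne_top_of_le_ne_top (lintegral_indicator_ofReal_mul_norm_ne_top hμ ‖lam‖)
    (lintegral_mono (toENNReal_neg_logIntegrand_le lam))

theorem continuous_lintegral_toENNReal_neg_logIntegrand
    (hμ : ∫⁻ x in {x | 1 < ‖x‖}, ENNReal.ofReal ‖x‖ ∂μ < ⊤) :
    Continuous fun lam => ∫⁻ x, (-logIntegrand lam x).toENNReal ∂μ := by
  refine continuous_lintegral_of_locally_dominated
    (fun lam => EReal.continuous_toENNReal.measurable.comp (measurable_logIntegrand lam).neg)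
    (fun x => EReal.continuous_toENNReal.comp (continuous_logIntegrand x).neg) fun lam₀ => ?_
  refine ⟨_, lintegral_indicator_ofReal_mul_norm_ne_top hμ (‖lam₀‖ + 1), ?_⟩
  filter_upwards [(continuous_norm.tendsto lam₀).eventually (gt_mem_nhds (lt_add_one ‖lam₀‖))]
    with lam hlam x
  refine (toENNReal_neg_logIntegrand_le lam x).trans ?_
  gcongr

theorem lowerSemicontinuous_lintegral_toENNReal_logIntegrand :
    LowerSemicontinuous fun lam => ∫⁻ x, (logIntegrand lam x).toENNReal ∂μ :=
  lowerSemicontinuous_lintegral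
    (fun lam => EReal.continuous_toENNReal.measurable.comp (measurable_logIntegrand lam))
    fun x => (EReal.continuous_toENNReal.comp (continuous_logIntegrand x)).lowerSemicontinuous

theorem lintegral_toENNReal_logIntegrand_eq_top {lam : E} (h : μ {x | 1 + ⟪lam, x⟫ ≤ 0} ≠ 0) :
    ∫⁻ x, (logIntegrand lam x).toENNReal ∂μ = ∞ := by
  refine lintegral_eq_top_of_measure_eq_top_ne_zero
    (EReal.continuous_toENNReal.measurable.comp (measurable_logIntegrand lam)).aemeasurable ?_
  refine fun h0 => h (measure_mono_null (fun x hx => ?_) h0)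
  simp [logIntegrand_of_nonpos hx]

theorem ite_eq_coe_sub_add_lintegral_logIntegrand
    (hμ : ∫⁻ x in {x | 1 < ‖x‖}, ENNReal.ofReal ‖x‖ ∂μ < ⊤) (r : ℝ) (lam : E) (g : E → ℝ)
    (hg : ∀ x, 0 < 1 + ⟪lam, x⟫ → logIntegrand lam x = g x) :
    (if μ {x | 1 + ⟪lam, x⟫ ≤ 0} = 0 then
        (r : EReal) + ((∫⁻ x, ENNReal.ofReal (g x) ∂μ : ℝ≥0∞) : EReal)
          - ((∫⁻ x, ENNReal.ofReal (-(g x)) ∂μ : ℝ≥0∞) : EReal)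
      else ⊤) =
      ((r - (∫⁻ x, (-logIntegrand lam x).toENNReal ∂μ).toReal : ℝ) : EReal)
        + ((∫⁻ x, (logIntegrand lam x).toENNReal ∂μ : ℝ≥0∞) : EReal) := by
  have hN := lintegral_toENNReal_neg_logIntegrand_ne_top hμ lam
  split_ifs with hbad
  · have hae : ∀ᵐ x ∂μ, logIntegrand lam x = g x := by
      refine (ae_iff.2 ?_).mono hg
      simpa only [not_lt] using hbad
    have hM : ∫⁻ x, ENNReal.ofReal (g x) ∂μ = ∫⁻ x, (logIntegrand lam x).toENNReal ∂μ :=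
      lintegral_congr_ae (hae.mono fun x hx => by simp only [hx, EReal.real_coe_toENNReal])
    have hN' : ∫⁻ x, ENNReal.ofReal (-(g x)) ∂μ = ∫⁻ x, (-logIntegrand lam x).toENNReal ∂μ :=
      lintegral_congr_ae <| hae.mono fun x hx => by
        simp only [hx, ← EReal.coe_neg, EReal.real_coe_toENNReal]
    rw [hM, hN']
    generalize ∫⁻ x, (-logIntegrand lam x).toENNReal ∂μ = N at hN ⊢
    lift N to NNReal using hN
    rw [EReal.coe_nnreal_eq_coe_real, ENNReal.coe_toReal, sub_eq_add_neg,
      add_right_comm, ← EReal.coe_neg, ← EReal.coe_add, ← sub_eq_add_neg]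
  · rw [lintegral_toENNReal_logIntegrand_eq_top hbad, EReal.coe_ennreal_top,
      EReal.add_top_of_ne_bot (EReal.coe_ne_bot _)]

end Integrals

theorem stmt_12_general (d : ℕ)
    (b : EuclideanSpace ℝ (Fin d))
    (c : EuclideanSpace ℝ (Fin d) →L[ℝ] EuclideanSpace ℝ (Fin d))
    (F : Measure (EuclideanSpace ℝ (Fin d)))
    (hF2 : ∫⁻ x in {x | 1 < ‖x‖}, ENNReal.ofReal ‖x‖ ∂F < ⊤)
    (g : EuclideanSpace ℝ (Fin d) → EuclideanSpace ℝ (Fin d) → ℝ)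
    (hg : ∀ lam x, g lam x =
      (if ‖x‖ ≤ 1 then ⟪lam, x⟫ else 0) - Real.log (1 + ⟪lam, x⟫))
    (L : EuclideanSpace ℝ (Fin d) → EReal)
    (hL : ∀ lam, L lam =
      if F {x | 1 + ⟪lam, x⟫ ≤ 0} = 0 then
        ((-⟪lam, b⟫ + (1/2) * ⟪lam, c lam⟫ : ℝ) : EReal)
          + ((∫⁻ x, ENNReal.ofReal (g lam x) ∂F : ℝ≥0∞) : EReal)
          - ((∫⁻ x, ENNReal.ofReal (-(g lam x)) ∂F : ℝ≥0∞) : EReal)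
      else (⊤ : EReal)) :
    LowerSemicontinuous L := by
  have hL' : L = fun lam =>
      ((-⟪lam, b⟫ + (1/2) * ⟪lam, c lam⟫ - (∫⁻ x, (-logIntegrand lam x).toENNReal ∂F).toReal : ℝ)
        : EReal) + ((∫⁻ x, (logIntegrand lam x).toENNReal ∂F : ℝ≥0∞) : EReal) := by
    funext lam
    rw [hL, ite_eq_coe_sub_add_lintegral_logIntegrand hF2 _ lam (g lam)
      fun x hx => by rw [logIntegrand_of_pos hx, hg]]
  rw [hL']
  refine LowerSemicontinuous.coe_add_coe_ennreal ?_
    lowerSemicontinuous_lintegral_toENNReal_logIntegrand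
  exact (by fun_prop : Continuous fun lam => -⟪lam, b⟫ + (1/2) * ⟪lam, c lam⟫).sub
    (ENNReal.continuousOn_toReal.comp_continuous
      (continuous_lintegral_toENNReal_neg_logIntegrand hF2)
      (lintegral_toENNReal_neg_logIntegrand_ne_top hF2))

theorem stmt_12 (d : ℕ)
    (b : EuclideanSpace ℝ (Fin d))
    (c : EuclideanSpace ℝ (Fin d) →L[ℝ] EuclideanSpace ℝ (Fin d))
    (hcsym : ∀ x y, ⟪c x, y⟫ = ⟪x, c y⟫) (hcpos : ∀ x, 0 ≤ ⟪x, c x⟫)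
    (F : Measure (EuclideanSpace ℝ (Fin d))) [SigmaFinite F]
    (hF0 : F {0} = 0)
    (hF1 : ∫⁻ x, ENNReal.ofReal (min (‖x‖ ^ 2) 1) ∂F < ⊤)
    (hF2 : ∫⁻ x in {x | 1 < ‖x‖}, ENNReal.ofReal ‖x‖ ∂F < ⊤)
    (g : EuclideanSpace ℝ (Fin d) → EuclideanSpace ℝ (Fin d) → ℝ)
    (hg : ∀ lam x, g lam x =
      (if ‖x‖ ≤ 1 then ⟪lam, x⟫ else 0) - Real.log (1 + ⟪lam, x⟫))
    (L : EuclideanSpace ℝ (Fin d) → EReal)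
    (hL : ∀ lam, L lam =
      if F {x | 1 + ⟪lam, x⟫ ≤ 0} = 0 then
        ((-⟪lam, b⟫ + (1/2) * ⟪lam, c lam⟫ : ℝ) : EReal)
          + ((∫⁻ x, ENNReal.ofReal (g lam x) ∂F : ℝ≥0∞) : EReal)
          - ((∫⁻ x, ENNReal.ofReal (-(g lam x)) ∂F : ℝ≥0∞) : EReal)
      else (⊤ : EReal)) :
    LowerSemicontinuous L :=
  stmt_12_general d b c F hF2 g hg L hL
end

section
/- With L as above, for λ ∈ dom(L) and y ∈ ℝ^d, the recession function L0⁺(y) := lim_{α→∞} (L(λ+αy) − L(λ))/α satisfies: L0⁺(y) = +∞ if yᵀcy > 0 or F({x : yᵀx < 0}) > 0, and L0⁺(y) = −yᵀb + ∫_{yᵀx>0} yᵀh(x) F(dx) otherwise (i.e., when cy = 0 and F({yᵀx < 0}) = 0). -/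
/-!
Write `L(λ) = Q(λ) + ∫ g_λ dF` with `Q` the quadratic part and
`g_λ(x) = ⟪λ, h(x)⟫ - log (1 + ⟪λ, x⟫)`. Since `log (1 + s) ≤ s`, the negative part of `g_λ` is at
most `‖λ‖ ‖x‖ 1_{‖x‖ > 1}`, so on the domain `∫ g_λ⁻ dF < ∞` and `L(λ) ≥ Q(λ) - C ‖λ‖`.

If `F` charges `{⟪y, x⟫ < 0}`, the ray `λ + α y` leaves the domain, and `L = +∞` there for large
`α`. If `⟪y, c y⟫ > 0`, the lower bound grows quadratically in `α`. Otherwise `c y = 0` (as `c` is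
positive semidefinite), `F`-a.e. `⟪y, x⟫ ≥ 0`, and the difference quotient is `-⟪y, b⟫` plus the
integral of the slope `(g_{λ + α y} - g_λ) / α`. This slope increases in `α` (`α ↦ g_{λ + α y}(x)`
is convex) to `⟪y, h(x)⟫ ≥ 0` (the logarithm grows sublinearly), so monotone convergence applies
to its positive part and, starting from the integrable value at `α = 1`, to its negative part.
-/

open MeasureTheory Filter Set Topology
open scoped RealInnerProductSpace ENNReal

lemma MonotoneOn.tendsto_atTop_of_tendsto_add_natCast {β : Type*} [CompleteLinearOrder β]
    [TopologicalSpace β] [OrderTopology β] {φ : ℝ → β} {a : ℝ} {l : β}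
    (hφ : MonotoneOn φ (Ici a)) (h : Tendsto (fun n : ℕ => φ (a + n)) atTop (𝓝 l)) :
    Tendsto φ atTop (𝓝 l) := by
  have hmono : Monotone fun t => φ (max a t) := fun s t hst =>
    hφ (le_max_left a s) (le_max_left a t) (max_le_max_left a hst)
  have hnat : Tendsto (fun n : ℕ => a + n) atTop atTop :=
    tendsto_atTop_add_const_left _ _ tendsto_natCast_atTop_atTop
  have hsup := tendsto_atTop_iSup hmono
  have hl : (⨆ t, φ (max a t)) = l := by
    refine tendsto_nhds_unique ((hsup.comp hnat).congr fun n => ?_) h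
    simp
  rw [← hl]
  refine hsup.congr' ?_
  filter_upwards [eventually_ge_atTop a] with t ht
  rw [max_eq_right ht]

lemma AntitoneOn.tendsto_atTop_of_tendsto_add_natCast {β : Type*} [CompleteLinearOrder β]
    [TopologicalSpace β] [OrderTopology β] {φ : ℝ → β} {a : ℝ} {l : β}
    (hφ : AntitoneOn φ (Ici a)) (h : Tendsto (fun n : ℕ => φ (a + n)) atTop (𝓝 l)) :
    Tendsto φ atTop (𝓝 l) :=
  MonotoneOn.tendsto_atTop_of_tendsto_add_natCast (β := βᵒᵈ) hφ h

lemma EReal.coe_ennreal_sub_eq_add_sub {p n p₁ n₁ p₂ n₂ : ℝ≥0∞}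
    (h : p + (n₁ + n₂) = n + (p₁ + p₂)) (hn : n ≠ ∞) (hn₁ : n₁ ≠ ∞) (hn₂ : n₂ ≠ ∞) :
    (p : EReal) - n = (p₁ - n₁) + (p₂ - n₂) := by
  by_cases htop : p₁ = ∞ ∨ p₂ = ∞
  · have hp : p = ∞ := by
      by_contra hp
      have : n + (p₁ + p₂) ≠ ∞ := h ▸ by finiteness
      simp_all
    lift n to NNReal using hn
    lift n₁ to NNReal using hn₁
    lift n₂ to NNReal using hn₂
    rcases htop with h' | h'
    · induction p₂ using ENNReal.recTopCoe <;>
        simp [h', hp, EReal.coe_nnreal_eq_coe_real, ← EReal.coe_sub]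
    · induction p₁ using ENNReal.recTopCoe <;>
        simp [h', hp, EReal.coe_nnreal_eq_coe_real, ← EReal.coe_sub]
  · push Not at htop
    obtain ⟨hp₁, hp₂⟩ := htop
    have hp : p ≠ ∞ := fun hp => by
      have : n + (p₁ + p₂) ≠ ∞ := by finiteness
      simp_all
    have hreal := congrArg ENNReal.toReal h
    rw [ENNReal.toReal_add hp (by finiteness), ENNReal.toReal_add hn (by finiteness),
      ENNReal.toReal_add hn₁ hn₂, ENNReal.toReal_add hp₁ hp₂] at hreal
    rw [← EReal.coe_ennreal_toReal hp, ← EReal.coe_ennreal_toReal hn,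
      ← EReal.coe_ennreal_toReal hp₁, ← EReal.coe_ennreal_toReal hn₁,
      ← EReal.coe_ennreal_toReal hp₂, ← EReal.coe_ennreal_toReal hn₂]
    norm_cast
    linarith

lemma ENNReal.ofReal_add_ofReal_neg_eq (v w : ℝ) :
    ENNReal.ofReal (v + w) + (ENNReal.ofReal (-v) + ENNReal.ofReal (-w)) =
      ENNReal.ofReal (-(v + w)) + (ENNReal.ofReal v + ENNReal.ofReal w) := by
  refine (ENNReal.toReal_eq_toReal_iff' (by finiteness) (by finiteness)).1 ?_
  simp only [ENNReal.toReal_add, ENNReal.add_ne_top, ENNReal.ofReal_ne_top, ne_eq,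
    not_false_eq_true, and_self, ENNReal.toReal_ofReal']
  grind

section SignedLintegral

variable {X : Type*} [MeasurableSpace X] {μ : Measure X}

lemma tendsto_lintegral_of_monotoneOn {f : ℝ → X → ℝ≥0∞} {g : X → ℝ≥0∞} {a : ℝ}
    (hf : ∀ t, AEMeasurable (f t) μ) (hmono : ∀ᵐ x ∂μ, MonotoneOn (f · x) (Ici a))
    (hlim : ∀ᵐ x ∂μ, Tendsto (f · x) atTop (𝓝 (g x))) :
    Tendsto (fun t => ∫⁻ x, f t x ∂μ) atTop (𝓝 (∫⁻ x, g x ∂μ)) := by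
  have hnat : Tendsto (fun n : ℕ => a + n) atTop atTop :=
    tendsto_atTop_add_const_left _ _ tendsto_natCast_atTop_atTop
  refine MonotoneOn.tendsto_atTop_of_tendsto_add_natCast
    (fun s hs t ht hst => lintegral_mono_ae (hmono.mono fun x hx => hx hs ht hst))
    (lintegral_tendsto_of_tendsto_of_monotone (fun n => hf _) ?_ ?_)
  · filter_upwards [hmono] with x hx m n hmn
    exact hx (by simp) (by simp) (by gcongr)
  · filter_upwards [hlim] with x hx using hx.comp hnat

lemma tendsto_lintegral_of_antitoneOn {f : ℝ → X → ℝ≥0∞} {g : X → ℝ≥0∞} {a : ℝ}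
    (hf : ∀ t, AEMeasurable (f t) μ) (hanti : ∀ᵐ x ∂μ, AntitoneOn (f · x) (Ici a))
    (hfin : ∫⁻ x, f a x ∂μ ≠ ∞) (hlim : ∀ᵐ x ∂μ, Tendsto (f · x) atTop (𝓝 (g x))) :
    Tendsto (fun t => ∫⁻ x, f t x ∂μ) atTop (𝓝 (∫⁻ x, g x ∂μ)) := by
  have hnat : Tendsto (fun n : ℕ => a + n) atTop atTop :=
    tendsto_atTop_add_const_left _ _ tendsto_natCast_atTop_atTop
  refine AntitoneOn.tendsto_atTop_of_tendsto_add_natCast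
    (fun s hs t ht hst => lintegral_mono_ae (hanti.mono fun x hx => hx hs ht hst))
    (lintegral_tendsto_of_tendsto_of_antitone (fun n => hf _) ?_ (by simpa using hfin) ?_)
  · filter_upwards [hanti] with x hx m n hmn
    exact hx (by simp) (by simp) (by gcongr)
  · filter_upwards [hlim] with x hx using hx.comp hnat

/-- When both parts are infinite, this is `⊤ - ⊤ = ⊥` rather than an integral. -/
noncomputable def signedLintegral (μ : Measure X) (f : X → ℝ) : EReal :=
  (∫⁻ x, ENNReal.ofReal (f x) ∂μ : ℝ≥0∞) - (∫⁻ x, ENNReal.ofReal (-f x) ∂μ : ℝ≥0∞)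

lemma neg_lintegral_le_signedLintegral (f : X → ℝ) :
    -((∫⁻ x, ENNReal.ofReal (-f x) ∂μ : ℝ≥0∞) : EReal) ≤ signedLintegral μ f := by
  rw [signedLintegral, sub_eq_add_neg]
  exact le_add_of_nonneg_left (EReal.coe_ennreal_nonneg _)

lemma signedLintegral_add {f g : X → ℝ} (hf : AEMeasurable f μ) (hg : AEMeasurable g μ)
    (hfn : ∫⁻ x, ENNReal.ofReal (-f x) ∂μ ≠ ∞) (hgn : ∫⁻ x, ENNReal.ofReal (-g x) ∂μ ≠ ∞) :
    signedLintegral μ (f + g) = signedLintegral μ f + signedLintegral μ g := by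
  have hfn' : AEMeasurable (fun x => ENNReal.ofReal (-f x)) μ := hf.neg.ennreal_ofReal
  have hsn' : AEMeasurable (fun x => ENNReal.ofReal (-(f + g) x)) μ :=
    (hf.add hg).neg.ennreal_ofReal
  have hs' : AEMeasurable (fun x => ENNReal.ofReal ((f + g) x)) μ := (hf.add hg).ennreal_ofReal
  have hN : ∫⁻ x, ENNReal.ofReal (-(f + g) x) ∂μ ≠ ∞ := by
    refine ne_top_of_le_ne_top (ENNReal.add_ne_top.2 ⟨hfn, hgn⟩) ?_
    rw [← lintegral_add_left' hfn']
    exact lintegral_mono fun x => by rw [Pi.add_apply, neg_add]; exact ENNReal.ofReal_add_le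
  refine EReal.coe_ennreal_sub_eq_add_sub ?_ hN hfn hgn
  rw [← lintegral_add_left' hfn', ← lintegral_add_left' hs',
    ← lintegral_add_left' hf.ennreal_ofReal, ← lintegral_add_left' hsn']
  exact lintegral_congr fun x => ENNReal.ofReal_add_ofReal_neg_eq (f x) (g x)

lemma signedLintegral_const_mul {f : X → ℝ} {a : ℝ} (ha : 0 ≤ a) :
    signedLintegral μ (fun x => a * f x) = a * signedLintegral μ f := by
  simp only [signedLintegral, ← mul_neg, ENNReal.ofReal_mul ha,
    lintegral_const_mul' _ _ ENNReal.ofReal_ne_top, EReal.coe_ennreal_mul,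
    EReal.coe_ennreal_ofReal, max_eq_left ha]
  exact (EReal.mul_sub_of_nonneg_of_ne_top (EReal.coe_nonneg.2 ha) (EReal.coe_ne_top a)).symm

lemma tendsto_signedLintegral_of_monotoneOn {f : ℝ → X → ℝ} {g : X → ℝ} {a : ℝ}
    (hf : ∀ t, AEMeasurable (f t) μ) (hmono : ∀ᵐ x ∂μ, MonotoneOn (f · x) (Ici a))
    (hfin : ∫⁻ x, ENNReal.ofReal (-f a x) ∂μ ≠ ∞)
    (hlim : ∀ᵐ x ∂μ, Tendsto (f · x) atTop (𝓝 (g x))) :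
    Tendsto (fun t => signedLintegral μ (f t)) atTop (𝓝 (signedLintegral μ g)) := by
  have hpos := tendsto_lintegral_of_monotoneOn (fun t => (hf t).ennreal_ofReal)
    (hmono.mono fun x hx s hs t ht hst => ENNReal.ofReal_le_ofReal (hx hs ht hst))
    (hlim.mono fun x hx => (ENNReal.continuous_ofReal.tendsto _).comp hx)
  have hneg := tendsto_lintegral_of_antitoneOn (fun t => (hf t).neg.ennreal_ofReal)
    (hmono.mono fun x hx s hs t ht hst => ENNReal.ofReal_le_ofReal (neg_le_neg (hx hs ht hst)))
    hfin (hlim.mono fun x hx => (ENNReal.continuous_ofReal.tendsto _).comp hx.neg)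
  have hlim_ne_top : ∫⁻ x, ENNReal.ofReal (-g x) ∂μ ≠ ∞ := by
    refine ne_top_of_le_ne_top hfin (le_of_tendsto hneg ?_)
    filter_upwards [eventually_ge_atTop a] with t ht
    exact lintegral_mono_ae (hmono.mono fun x hx =>
      ENNReal.ofReal_le_ofReal (neg_le_neg (hx self_mem_Ici ht ht)))
  have hsub : ContinuousAt (fun p : EReal × EReal => p.1 + p.2)
      ((∫⁻ x, ENNReal.ofReal (g x) ∂μ : ℝ≥0∞),
        -((∫⁻ x, ENNReal.ofReal (-g x) ∂μ : ℝ≥0∞) : EReal)) :=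
    EReal.continuousAt_add (.inr (by simpa using hlim_ne_top)) (.inl (by simp))
  exact hsub.tendsto.comp ((EReal.tendsto_coe_ennreal.2 hpos).prodMk_nhds
    (EReal.tendsto_coe_ennreal.2 hneg).neg)

end SignedLintegral

lemma antitoneOn_slope_log_add_mul {a u : ℝ} (ha : 0 < a) (hu : 0 ≤ u) :
    AntitoneOn (slope (fun t => Real.log (a + t * u)) 0) (Ioi 0) := by
  have hconc : ConcaveOn ℝ (AffineMap.lineMap a (a + u) ⁻¹' Ioi 0)
      (fun t => Real.log (a + t * u)) :=
    (strictConcaveOn_log_Ioi.concaveOn.comp_affineMap (AffineMap.lineMap a (a + u))).congr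
      fun t _ => by simp [AffineMap.lineMap_apply_ring', add_comm]
  refine (hconc.antitoneOn_slope_gt (by simp [AffineMap.lineMap_apply_ring', ha])).mono
    fun t (ht : 0 < t) => ⟨?_, ht⟩
  simp only [mem_preimage, AffineMap.lineMap_apply_ring', mem_Ioi]
  nlinarith

lemma tendsto_slope_log_add_mul (a : ℝ) {u : ℝ} (hu : 0 ≤ u) :
    Tendsto (slope (fun t => Real.log (a + t * u)) 0) atTop (𝓝 0) := by
  have hslope : slope (fun t => Real.log (a + t * u)) 0 =
      fun t => (Real.log (a + t * u) - Real.log a) / t :=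
    funext fun t => by simp [slope_def_field]
  rw [hslope]
  rcases hu.eq_or_lt with rfl | hu
  · simp
  have hlog : Tendsto (fun t => Real.log (a + t * u) / t) atTop (𝓝 0) := by
    have hx : Tendsto (fun t => a + t * u) atTop atTop :=
      tendsto_atTop_add_const_left _ _ (tendsto_id.atTop_mul_const hu)
    refine ((Real.tendsto_pow_log_div_mul_add_atTop u⁻¹ (-(a / u)) 1
      (inv_ne_zero hu.ne')).comp hx).congr fun t => ?_
    simp only [Function.comp_apply, pow_one]
    congr 1
    field_simp
    ring
  simpa [sub_div] using hlog.sub (tendsto_const_nhds.div_atTop tendsto_id)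

section Levy

variable {E : Type*} [NormedAddCommGroup E] [InnerProductSpace ℝ E] {b : E} {c : E →L[ℝ] E}
  {lam y : E}

lemma LinearMap.IsSymmetric.inner_add_smul_map_add_smul {c : E →ₗ[ℝ] E} (hc : c.IsSymmetric)
    (u v : E) (t : ℝ) :
    ⟪u + t • v, c (u + t • v)⟫ = ⟪u, c u⟫ + 2 * t * ⟪u, c v⟫ + t ^ 2 * ⟪v, c v⟫ := by
  have hvu : ⟪v, c u⟫ = ⟪u, c v⟫ := by rw [← hc, real_inner_comm]
  simp only [map_add, map_smul, inner_add_left, inner_add_right, real_inner_smul_left,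
    real_inner_smul_right, hvu]
  ring

lemma LinearMap.IsSymmetric.map_eq_zero_of_inner_map_self_eq_zero {c : E →ₗ[ℝ] E}
    (hc : c.IsSymmetric) (hpos : ∀ x, 0 ≤ ⟪x, c x⟫) {y : E} (hy : ⟪y, c y⟫ = 0) : c y = 0 := by
  have hlin : ∀ t : ℝ, 0 ≤ ⟪c y, c (c y)⟫ + t * (2 * ⟪c y, c y⟫) := fun t => by
    have := hpos (c y + t • y)
    rw [hc.inner_add_smul_map_add_smul, hy] at this
    linarith
  have h := hlin (-(⟪c y, c (c y)⟫ + 1) / (2 * ⟪c y, c y⟫))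
  by_contra hne
  have : 0 < ⟪c y, c y⟫ := real_inner_self_pos.2 hne
  rw [div_mul_cancel₀ _ (by positivity)] at h
  linarith

noncomputable def levyIntegrand (lam x : E) : ℝ :=
  (if ‖x‖ ≤ 1 then ⟪lam, x⟫ else 0) - Real.log (1 + ⟪lam, x⟫)

noncomputable def levyQuadratic (b : E) (c : E →L[ℝ] E) (lam : E) : ℝ :=
  -⟪lam, b⟫ + (1 / 2) * ⟪lam, c lam⟫

lemma levyQuadratic_add_smul (hc : (c : E →ₗ[ℝ] E).IsSymmetric) (t : ℝ) :
    levyQuadratic b c (lam + t • y) =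
      levyQuadratic b c lam + t * (⟪lam, c y⟫ - ⟪y, b⟫) + t ^ 2 / 2 * ⟪y, c y⟫ := by
  have := hc.inner_add_smul_map_add_smul lam y t
  simp only [ContinuousLinearMap.coe_coe] at this
  simp only [levyQuadratic, this, inner_add_left, real_inner_smul_left]
  ring

-- `log (1 + s) ≤ s` makes the integrand nonnegative on `‖x‖ ≤ 1`.
lemma neg_levyIntegrand_le_indicator {lam x : E} (hx : 0 < 1 + ⟪lam, x⟫) :
    -levyIntegrand lam x ≤ {x : E | 1 < ‖x‖}.indicator (fun x => ‖lam‖ * ‖x‖) x := by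
  have hlog := Real.log_le_sub_one_of_pos hx
  by_cases h : ‖x‖ ≤ 1
  · rw [indicator_of_notMem (by simpa using h)]
    simp only [levyIntegrand, if_pos h]
    linarith
  · rw [indicator_of_mem (by simpa using h)]
    simp only [levyIntegrand, if_neg h]
    linarith [real_inner_le_norm lam x]

lemma levyIntegrand_add_smul (lam y x : E) (t : ℝ) :
    levyIntegrand (lam + t • y) x =
      levyIntegrand lam x + t * slope (fun s : ℝ => levyIntegrand (lam + s • y) x) 0 t := by
  have := sub_smul_slope (fun s : ℝ => levyIntegrand (lam + s • y) x) 0 t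
  simp only [sub_zero, smul_eq_mul, zero_smul, add_zero, vsub_eq_sub] at this
  linarith

lemma slope_levyIntegrand_add_smul (lam y x : E) {t : ℝ} (ht : t ≠ 0) :
    slope (fun s : ℝ => levyIntegrand (lam + s • y) x) 0 t =
      (if ‖x‖ ≤ 1 then ⟪y, x⟫ else 0) -
        slope (fun s : ℝ => Real.log (1 + ⟪lam, x⟫ + s * ⟪y, x⟫)) 0 t := by
  simp only [slope_def_field, levyIntegrand, inner_add_left, real_inner_smul_left,
    add_zero, zero_mul, sub_zero, add_assoc]
  split_ifs <;> field_simp <;> ring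

lemma monotoneOn_slope_levyIntegrand_add_smul {lam y x : E} (hx : 0 < 1 + ⟪lam, x⟫)
    (hy : 0 ≤ ⟪y, x⟫) :
    MonotoneOn (slope (fun s : ℝ => levyIntegrand (lam + s • y) x) 0) (Ioi 0) :=
    fun s hs t ht hst => by
  rw [slope_levyIntegrand_add_smul lam y x (ne_of_gt hs),
    slope_levyIntegrand_add_smul lam y x (ne_of_gt ht)]
  linarith [antitoneOn_slope_log_add_mul hx hy hs ht hst]

lemma tendsto_slope_levyIntegrand_add_smul (lam : E) {y x : E} (hy : 0 ≤ ⟪y, x⟫) :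
    Tendsto (slope (fun s : ℝ => levyIntegrand (lam + s • y) x) 0) atTop
      (𝓝 (if ‖x‖ ≤ 1 then ⟪y, x⟫ else 0)) := by
  have h := tendsto_const_nhds (x := if ‖x‖ ≤ 1 then ⟪y, x⟫ else 0) (f := atTop) |>.sub
    (tendsto_slope_log_add_mul (1 + ⟪lam, x⟫) hy)
  rw [sub_zero] at h
  refine h.congr' ?_
  filter_upwards [eventually_gt_atTop 0] with t ht
  exact (slope_levyIntegrand_add_smul lam y x ht.ne').symm

variable [MeasurableSpace E] {F : Measure E}

/-- `L` of the statement: off the domain `ln ((1 + ⟪λ, x⟫)⁺) = -∞` on a non-null set and `L = ⊤`. -/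
noncomputable def levyFunctional (b : E) (c : E →L[ℝ] E) (F : Measure E) (lam : E) : EReal :=
  if F {x | 1 + ⟪lam, x⟫ ≤ 0} = 0 then
    (levyQuadratic b c lam : EReal) + signedLintegral F (levyIntegrand lam)
  else ⊤

lemma ae_one_add_inner_pos {lam : E} (hdom : F {x | 1 + ⟪lam, x⟫ ≤ 0} = 0) :
    ∀ᵐ x ∂F, 0 < 1 + ⟪lam, x⟫ := by
  simpa [ae_iff] using hdom

lemma measure_eq_zero_of_levyFunctional_ne_top (h : levyFunctional b c F lam ≠ ⊤) :
    F {x | 1 + ⟪lam, x⟫ ≤ 0} = 0 := by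
  by_contra hdom
  exact h (if_neg hdom)

lemma measure_one_add_inner_add_smul_nonpos_eq_zero (hdom : F {x | 1 + ⟪lam, x⟫ ≤ 0} = 0)
    (hy : F {x | ⟪y, x⟫ < 0} = 0) {t : ℝ} (ht : 0 ≤ t) :
    F {x | 1 + ⟪lam + t • y, x⟫ ≤ 0} = 0 := by
  refine measure_mono_null (fun x (hx : 1 + ⟪lam + t • y, x⟫ ≤ 0) => ?_)
    (measure_union_null hdom hy)
  rw [inner_add_left, real_inner_smul_left] at hx
  by_contra h
  simp only [mem_union, mem_ofPred_eq, not_or, not_le, not_lt] at h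
  nlinarith

/-- Every `x` with `⟪y, x⟫ < 0` eventually leaves the domain along the ray `λ + t • y`. -/
lemma eventually_levyFunctional_add_smul_eq_top (hy : F {x | ⟪y, x⟫ < 0} ≠ 0) :
    ∀ᶠ t : ℝ in atTop, levyFunctional b c F (lam + t • y) = ⊤ := by
  have hexp : ∀ (t : ℝ) (x : E), 1 + ⟪lam + t • y, x⟫ = 1 + ⟪lam, x⟫ + t * ⟪y, x⟫ := fun t x => by
    rw [inner_add_left, real_inner_smul_left, add_assoc]
  let A : ℕ → Set E := fun n => {x | ⟪y, x⟫ < 0 ∧ 1 + ⟪lam, x⟫ + n * ⟪y, x⟫ ≤ 0}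
  have hcover : {x | ⟪y, x⟫ < 0} ⊆ ⋃ n, A n := fun x (hx : ⟪y, x⟫ < 0) => by
    obtain ⟨n, hn⟩ := exists_nat_ge ((1 + ⟪lam, x⟫) / -⟪y, x⟫)
    rw [div_le_iff₀ (neg_pos.2 hx)] at hn
    exact mem_iUnion.2 ⟨n, hx, by linarith⟩
  obtain ⟨n, hn⟩ : ∃ n, F (A n) ≠ 0 := by
    by_contra! h
    exact hy (measure_mono_null hcover (measure_iUnion_null h))
  filter_upwards [eventually_ge_atTop (n : ℝ)] with t ht
  refine if_neg fun hdom => hn (measure_mono_null (fun x ⟨hx₁, hx₂⟩ => ?_) hdom)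
  change 1 + ⟪lam + t • y, x⟫ ≤ 0
  rw [hexp]
  nlinarith

lemma tendsto_levyFunctional_slope_top_of_measure_ne_zero (hlam : levyFunctional b c F lam ≠ ⊤)
    (hy : F {x | ⟪y, x⟫ < 0} ≠ 0) :
    Tendsto (fun t : ℝ => (levyFunctional b c F (lam + t • y) - levyFunctional b c F lam) / t)
      atTop (𝓝 ⊤) := by
  refine tendsto_const_nhds.congr' ?_
  filter_upwards [eventually_levyFunctional_add_smul_eq_top hy, eventually_gt_atTop 0]
    with t ht htpos
  rw [ht, EReal.top_sub hlam,
    EReal.top_div_of_pos_ne_top (EReal.coe_pos.2 htpos) (EReal.coe_ne_top t)]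

lemma signedLintegral_truncated_inner (hy : F {x | ⟪y, x⟫ < 0} = 0) :
    signedLintegral F (fun x => if ‖x‖ ≤ 1 then ⟪y, x⟫ else 0) =
      ((∫⁻ x in {x | 0 < ⟪y, x⟫}, ENNReal.ofReal (if ‖x‖ ≤ 1 then ⟪y, x⟫ else 0) ∂F : ℝ≥0∞) :
        EReal) := by
  have hneg : ∫⁻ x, ENNReal.ofReal (-if ‖x‖ ≤ 1 then ⟪y, x⟫ else 0) ∂F = 0 := by
    have hyae : ∀ᵐ x ∂F, 0 ≤ ⟪y, x⟫ := by simpa [ae_iff] using hy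
    rw [← lintegral_zero]
    refine lintegral_congr_ae ?_
    filter_upwards [hyae] with x hx
    split_ifs <;> simp [hx]
  rw [signedLintegral, hneg, setLIntegral_eq_of_support_subset]
  · simp
  · intro x hx
    simp only [Function.mem_support, ne_eq, ENNReal.ofReal_eq_zero, not_le] at hx
    split_ifs at hx
    exacts [hx, hx.false.elim]

variable [OpensMeasurableSpace E]

lemma measurable_levyIntegrand (lam : E) : Measurable (levyIntegrand lam) := by
  have hinner : Measurable fun x : E => ⟪lam, x⟫ :=
    (continuous_const.inner continuous_id).measurable
  exact (Measurable.ite (measurableSet_le measurable_norm measurable_const) hinner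
    measurable_const).sub (Real.measurable_log.comp (measurable_const.add hinner))

lemma measurable_slope_levyIntegrand_add_smul (lam y : E) (t : ℝ) :
    Measurable fun x => slope (fun s : ℝ => levyIntegrand (lam + s • y) x) 0 t := by
  simp only [slope_def_field]
  exact ((measurable_levyIntegrand _).sub (measurable_levyIntegrand _)).div_const _

lemma lintegral_neg_levyIntegrand_le {lam : E} (hdom : F {x | 1 + ⟪lam, x⟫ ≤ 0} = 0) :
    ∫⁻ x, ENNReal.ofReal (-levyIntegrand lam x) ∂F ≤
      ENNReal.ofReal ‖lam‖ * ∫⁻ x in {x : E | 1 < ‖x‖}, ENNReal.ofReal ‖x‖ ∂F := by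
  have hset : MeasurableSet {x : E | 1 < ‖x‖} := measurableSet_lt measurable_const measurable_norm
  calc ∫⁻ x, ENNReal.ofReal (-levyIntegrand lam x) ∂F
      ≤ ∫⁻ x, ENNReal.ofReal ({x : E | 1 < ‖x‖}.indicator (fun x => ‖lam‖ * ‖x‖) x) ∂F :=
        lintegral_mono_ae ((ae_one_add_inner_pos hdom).mono fun x hx =>
          ENNReal.ofReal_le_ofReal (neg_levyIntegrand_le_indicator hx))
    _ = ∫⁻ x, {x : E | 1 < ‖x‖}.indicator (fun x => ENNReal.ofReal (‖lam‖ * ‖x‖)) x ∂F := by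
        congr 1 with x
        by_cases hx : 1 < ‖x‖ <;> simp [hx]
    _ = ENNReal.ofReal ‖lam‖ * ∫⁻ x in {x : E | 1 < ‖x‖}, ENNReal.ofReal ‖x‖ ∂F := by
        simp only [lintegral_indicator hset, ENNReal.ofReal_mul (norm_nonneg lam)]
        exact lintegral_const_mul _ measurable_norm.ennreal_ofReal

variable (hF : ∫⁻ x in {x : E | 1 < ‖x‖}, ENNReal.ofReal ‖x‖ ∂F < ⊤)
include hF

lemma lintegral_neg_levyIntegrand_ne_top (hdom : F {x | 1 + ⟪lam, x⟫ ≤ 0} = 0) :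
    ∫⁻ x, ENNReal.ofReal (-levyIntegrand lam x) ∂F ≠ ∞ :=
  ne_top_of_le_ne_top (by finiteness) (lintegral_neg_levyIntegrand_le hdom)

lemma le_levyFunctional :
    ((levyQuadratic b c lam -
      ‖lam‖ * (∫⁻ x in {x : E | 1 < ‖x‖}, ENNReal.ofReal ‖x‖ ∂F).toReal : ℝ) : EReal) ≤
      levyFunctional b c F lam := by
  unfold levyFunctional
  split_ifs with hdom
  · rw [EReal.coe_sub, sub_eq_add_neg]
    refine add_le_add_right (le_trans ?_ (neg_lintegral_le_signedLintegral (μ := F) _)) _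
    rw [EReal.neg_le_neg_iff]
    calc ((∫⁻ x, ENNReal.ofReal (-levyIntegrand lam x) ∂F : ℝ≥0∞) : EReal)
        ≤ ((ENNReal.ofReal (‖lam‖ *
            (∫⁻ x in {x : E | 1 < ‖x‖}, ENNReal.ofReal ‖x‖ ∂F).toReal) : ℝ≥0∞) : EReal) := by
          rw [EReal.coe_ennreal_le_coe_ennreal_iff, ENNReal.ofReal_mul (norm_nonneg _),
            ENNReal.ofReal_toReal hF.ne]
          exact lintegral_neg_levyIntegrand_le hdom
      _ = _ := by rw [EReal.coe_ennreal_ofReal, max_eq_left (by positivity)]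
  · exact le_top

lemma lintegral_levyIntegrand_ne_top (h : levyFunctional b c F lam ≠ ⊤) :
    ∫⁻ x, ENNReal.ofReal (levyIntegrand lam x) ∂F ≠ ∞ := by
  have hdom := measure_eq_zero_of_levyFunctional_ne_top h
  intro htop
  lift ∫⁻ x, ENNReal.ofReal (-levyIntegrand lam x) ∂F to NNReal
    using lintegral_neg_levyIntegrand_ne_top hF hdom with N hN
  simp [levyFunctional, signedLintegral, hdom, htop, ← hN] at h

lemma levyFunctional_eq_coe_toReal (h : levyFunctional b c F lam ≠ ⊤) :
    levyFunctional b c F lam = ((levyFunctional b c F lam).toReal : EReal) :=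
  (EReal.coe_toReal h (ne_bot_of_le_ne_bot (EReal.coe_ne_bot _) (le_levyFunctional hF))).symm

lemma tendsto_levyFunctional_slope_top_of_inner_map_pos (hc : (c : E →ₗ[ℝ] E).IsSymmetric)
    (hlam : levyFunctional b c F lam ≠ ⊤) (hy : 0 < ⟪y, c y⟫) :
    Tendsto (fun t : ℝ => (levyFunctional b c F (lam + t • y) - levyFunctional b c F lam) / t)
      atTop (𝓝 ⊤) := by
  set C := (∫⁻ x in {x : E | 1 < ‖x‖}, ENNReal.ofReal ‖x‖ ∂F).toReal
  set r := (levyFunctional b c F lam).toReal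
  have hC : 0 ≤ C := ENNReal.toReal_nonneg
  set B := ⟪lam, c y⟫ - ⟪y, b⟫ - ‖y‖ * C
  set K := levyQuadratic b c lam - ‖lam‖ * C - r
  have hlin : Tendsto (fun t : ℝ => ⟪y, c y⟫ / 2 * t + B + K / t) atTop atTop :=
    ((tendsto_id.const_mul_atTop (by positivity)).atTop_add tendsto_const_nhds).atTop_add
      (tendsto_const_nhds.div_atTop tendsto_id)
  have hbound : ∀ t : ℝ, 0 < t → ⟪y, c y⟫ / 2 * t + B + K / t ≤
      (levyQuadratic b c (lam + t • y) - ‖lam + t • y‖ * C - r) / t := fun t ht => by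
    have hnorm : ‖lam + t • y‖ ≤ ‖lam‖ + t * ‖y‖ := by
      simpa [norm_smul, abs_of_pos ht] using norm_add_le lam (t • y)
    rw [le_div_iff₀ ht, add_mul, div_mul_cancel₀ _ ht.ne', levyQuadratic_add_smul hc]
    nlinarith [mul_le_mul_of_nonneg_right hnorm hC]
  refine tendsto_nhds_top_mono (EReal.tendsto_coe_nhds_top_iff.2
    (tendsto_atTop_mono' _ (eventually_gt_atTop 0 |>.mono hbound) hlin)) ?_
  filter_upwards [eventually_gt_atTop 0] with t ht
  rw [levyFunctional_eq_coe_toReal hF hlam, EReal.coe_div, EReal.coe_sub]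
  exact EReal.div_le_div_right_of_nonneg (EReal.coe_nonneg.2 ht.le)
    (EReal.sub_le_sub (le_levyFunctional hF) le_rfl)

lemma lintegral_neg_mul_slope_levyIntegrand_ne_top (hlam : levyFunctional b c F lam ≠ ⊤)
    (hy : F {x | ⟪y, x⟫ < 0} = 0) {t : ℝ} (ht : 0 ≤ t) :
    ∫⁻ x, ENNReal.ofReal (-(t * slope (fun s : ℝ => levyIntegrand (lam + s • y) x) 0 t)) ∂F
      ≠ ∞ := by
  have hdom := measure_eq_zero_of_levyFunctional_ne_top hlam
  have hle : ∀ x, ENNReal.ofReal (-(t * slope (fun s : ℝ => levyIntegrand (lam + s • y) x) 0 t)) ≤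
      ENNReal.ofReal (levyIntegrand lam x) + ENNReal.ofReal (-levyIntegrand (lam + t • y) x) :=
    fun x => by
      rw [show -(t * slope (fun s : ℝ => levyIntegrand (lam + s • y) x) 0 t) =
          levyIntegrand lam x + -levyIntegrand (lam + t • y) x by
        linarith [levyIntegrand_add_smul lam y x t]]
      exact ENNReal.ofReal_add_le
  refine ne_top_of_le_ne_top ?_ (lintegral_mono hle)
  rw [lintegral_add_left (measurable_levyIntegrand lam).ennreal_ofReal]
  exact ENNReal.add_ne_top.2 ⟨lintegral_levyIntegrand_ne_top hF hlam,
    lintegral_neg_levyIntegrand_ne_top hF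
      (measure_one_add_inner_add_smul_nonpos_eq_zero hdom hy ht)⟩

lemma levyFunctional_add_smul_sub_div (hc : (c : E →ₗ[ℝ] E).IsSymmetric) (hcy : c y = 0)
    (hlam : levyFunctional b c F lam ≠ ⊤) (hy : F {x | ⟪y, x⟫ < 0} = 0) {t : ℝ} (ht : 0 < t) :
    (levyFunctional b c F (lam + t • y) - levyFunctional b c F lam) / t =
      ((-⟪y, b⟫ : ℝ) : EReal) +
        signedLintegral F (fun x => slope (fun s : ℝ => levyIntegrand (lam + s • y) x) 0 t) := by
  have hdom := measure_eq_zero_of_levyFunctional_ne_top hlam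
  set q := fun x => slope (fun s : ℝ => levyIntegrand (lam + s • y) x) 0 t
  have hsplit : levyIntegrand (lam + t • y) = levyIntegrand lam + fun x => t * q x :=
    funext fun x => levyIntegrand_add_smul lam y x t
  have hS : signedLintegral F (levyIntegrand (lam + t • y)) =
      signedLintegral F (levyIntegrand lam) + t * signedLintegral F q := by
    rw [hsplit, signedLintegral_add (measurable_levyIntegrand lam).aemeasurable
      ((measurable_slope_levyIntegrand_add_smul lam y t).const_mul t).aemeasurable
      (lintegral_neg_levyIntegrand_ne_top hF hdom)
      (lintegral_neg_mul_slope_levyIntegrand_ne_top hF hlam hy ht.le),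
      signedLintegral_const_mul ht.le]
  have hQ : levyQuadratic b c (lam + t • y) = levyQuadratic b c lam + t * -⟪y, b⟫ := by
    have hlc : ⟪lam, c y⟫ = 0 := by rw [hcy, inner_zero_right]
    rw [levyQuadratic_add_smul hc, hlc, hcy, inner_zero_right]
    ring
  obtain ⟨s0, hs0⟩ : ∃ s0 : ℝ, signedLintegral F (levyIntegrand lam) = s0 :=
    ⟨_, by rw [signedLintegral,
      ← EReal.coe_ennreal_toReal (lintegral_levyIntegrand_ne_top hF hlam),
      ← EReal.coe_ennreal_toReal (lintegral_neg_levyIntegrand_ne_top hF hdom),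
      ← EReal.coe_sub]⟩
  -- what is left is a rearrangement in which every term but `signedLintegral F q` is real
  rw [levyFunctional, if_pos (measure_one_add_inner_add_smul_nonpos_eq_zero hdom hy ht.le),
    levyFunctional, if_pos hdom, hS, hQ, hs0,
    EReal.div_eq_iff (EReal.coe_ne_bot t) (EReal.coe_ne_top t) (EReal.coe_ne_zero.2 ht.ne'),
    EReal.right_distrib_of_nonneg_of_ne_top (EReal.coe_nonneg.2 ht.le) (EReal.coe_ne_top t),
    ← EReal.coe_add, ← EReal.coe_mul, mul_comm (signedLintegral F q), ← add_assoc, ← EReal.coe_add,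
    sub_eq_add_neg, add_right_comm, ← sub_eq_add_neg, ← EReal.coe_sub]
  congr 2
  ring

lemma tendsto_levyFunctional_slope_of_map_eq_zero (hc : (c : E →ₗ[ℝ] E).IsSymmetric)
    (hcy : c y = 0) (hlam : levyFunctional b c F lam ≠ ⊤) (hy : F {x | ⟪y, x⟫ < 0} = 0) :
    Tendsto (fun t : ℝ => (levyFunctional b c F (lam + t • y) - levyFunctional b c F lam) / t)
      atTop (𝓝 (((-⟪y, b⟫ : ℝ) : EReal) +
        ((∫⁻ x in {x | 0 < ⟪y, x⟫}, ENNReal.ofReal (if ‖x‖ ≤ 1 then ⟪y, x⟫ else 0) ∂F : ℝ≥0∞) :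
          EReal))) := by
  have hdom := measure_eq_zero_of_levyFunctional_ne_top hlam
  have hyae : ∀ᵐ x ∂F, 0 ≤ ⟪y, x⟫ := by simpa [ae_iff] using hy
  have hslope : Tendsto
      (fun t => signedLintegral F (fun x => slope (fun s : ℝ => levyIntegrand (lam + s • y) x) 0 t))
      atTop (𝓝 (signedLintegral F (fun x => if ‖x‖ ≤ 1 then ⟪y, x⟫ else 0))) := by
    refine tendsto_signedLintegral_of_monotoneOn (a := 1) (fun t => ?_) ?_ ?_ ?_
    · exact (measurable_slope_levyIntegrand_add_smul lam y t).aemeasurable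
    · filter_upwards [hyae, ae_one_add_inner_pos hdom] with x hyx hx
      exact (monotoneOn_slope_levyIntegrand_add_smul hx hyx).mono
        fun t (ht : 1 ≤ t) => zero_lt_one.trans_le ht
    · simpa using lintegral_neg_mul_slope_levyIntegrand_ne_top hF hlam hy zero_le_one
    · filter_upwards [hyae] with x hyx using tendsto_slope_levyIntegrand_add_smul lam hyx
  rw [← signedLintegral_truncated_inner hy]
  refine ((EReal.continuousAt_add (.inl (EReal.coe_ne_top _))
    (.inl (EReal.coe_ne_bot _))).tendsto.comp (tendsto_const_nhds.prodMk_nhds hslope)).congr' ?_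
  filter_upwards [eventually_gt_atTop 0] with t ht
  exact (levyFunctional_add_smul_sub_div hF hc hcy hlam hy ht).symm

end Levy

theorem stmt_13_general (d : ℕ)
    (b : EuclideanSpace ℝ (Fin d))
    (c : EuclideanSpace ℝ (Fin d) →L[ℝ] EuclideanSpace ℝ (Fin d))
    (hcsym : ∀ x y, ⟪c x, y⟫ = ⟪x, c y⟫) (hcpos : ∀ x, 0 ≤ ⟪x, c x⟫)
    (F : Measure (EuclideanSpace ℝ (Fin d)))
    (hF2 : ∫⁻ x in {x | 1 < ‖x‖}, ENNReal.ofReal ‖x‖ ∂F < ⊤)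
    (g : EuclideanSpace ℝ (Fin d) → EuclideanSpace ℝ (Fin d) → ℝ)
    (hg : ∀ lam x, g lam x =
      (if ‖x‖ ≤ 1 then ⟪lam, x⟫ else 0) - Real.log (1 + ⟪lam, x⟫))
    (L : EuclideanSpace ℝ (Fin d) → EReal)
    (hL : ∀ lam, L lam =
      if F {x | 1 + ⟪lam, x⟫ ≤ 0} = 0 then
        ((-⟪lam, b⟫ + (1/2) * ⟪lam, c lam⟫ : ℝ) : EReal)
          + ((∫⁻ x, ENNReal.ofReal (g lam x) ∂F : ℝ≥0∞) : EReal)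
          - ((∫⁻ x, ENNReal.ofReal (-(g lam x)) ∂F : ℝ≥0∞) : EReal)
      else (⊤ : EReal)) :
    ∀ lam, L lam ≠ (⊤ : EReal) → ∀ y : EuclideanSpace ℝ (Fin d),
      Filter.Tendsto (fun α : ℝ => (L (lam + α • y) - L lam) / ((α : ℝ) : EReal))
        Filter.atTop
        (nhds (if 0 < ⟪y, c y⟫ ∨ F {x | ⟪y, x⟫ < 0} ≠ 0 then (⊤ : EReal)
          else ((-⟪y, b⟫ : ℝ) : EReal) +
            ((∫⁻ x in {x | 0 < ⟪y, x⟫},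
              ENNReal.ofReal (if ‖x‖ ≤ 1 then ⟪y, x⟫ else 0) ∂F : ℝ≥0∞) : EReal))) := by
  obtain rfl : g = levyIntegrand := funext fun lam => funext (hg lam)
  obtain rfl : L = levyFunctional b c F := funext fun lam => by
    rw [hL, levyFunctional, levyQuadratic, signedLintegral, add_sub_assoc]
  have hc : (c : EuclideanSpace ℝ (Fin d) →ₗ[ℝ] EuclideanSpace ℝ (Fin d)).IsSymmetric := hcsym
  intro lam hlam y
  split_ifs with hy
  · rcases hy with hy | hy
    · exact tendsto_levyFunctional_slope_top_of_inner_map_pos hF2 hc hlam hy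
    · exact tendsto_levyFunctional_slope_top_of_measure_ne_zero hlam hy
  · push Not at hy
    exact tendsto_levyFunctional_slope_of_map_eq_zero hF2 hc
      (hc.map_eq_zero_of_inner_map_self_eq_zero hcpos (le_antisymm hy.1 (hcpos y))) hlam hy.2

theorem stmt_13 (d : ℕ)
    (b : EuclideanSpace ℝ (Fin d))
    (c : EuclideanSpace ℝ (Fin d) →L[ℝ] EuclideanSpace ℝ (Fin d))
    (hcsym : ∀ x y, ⟪c x, y⟫ = ⟪x, c y⟫) (hcpos : ∀ x, 0 ≤ ⟪x, c x⟫)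
    (F : Measure (EuclideanSpace ℝ (Fin d))) [SigmaFinite F]
    (hF0 : F {0} = 0)
    (hF1 : ∫⁻ x, ENNReal.ofReal (min (‖x‖ ^ 2) 1) ∂F < ⊤)
    (hF2 : ∫⁻ x in {x | 1 < ‖x‖}, ENNReal.ofReal ‖x‖ ∂F < ⊤)
    (g : EuclideanSpace ℝ (Fin d) → EuclideanSpace ℝ (Fin d) → ℝ)
    (hg : ∀ lam x, g lam x =
      (if ‖x‖ ≤ 1 then ⟪lam, x⟫ else 0) - Real.log (1 + ⟪lam, x⟫))
    (L : EuclideanSpace ℝ (Fin d) → EReal)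
    (hL : ∀ lam, L lam =
      if F {x | 1 + ⟪lam, x⟫ ≤ 0} = 0 then
        ((-⟪lam, b⟫ + (1/2) * ⟪lam, c lam⟫ : ℝ) : EReal)
          + ((∫⁻ x, ENNReal.ofReal (g lam x) ∂F : ℝ≥0∞) : EReal)
          - ((∫⁻ x, ENNReal.ofReal (-(g lam x)) ∂F : ℝ≥0∞) : EReal)
      else (⊤ : EReal)) :
    ∀ lam, L lam ≠ (⊤ : EReal) → ∀ y : EuclideanSpace ℝ (Fin d),
      Filter.Tendsto (fun α : ℝ => (L (lam + α • y) - L lam) / ((α : ℝ) : EReal))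
        Filter.atTop
        (nhds (if 0 < ⟪y, c y⟫ ∨ F {x | ⟪y, x⟫ < 0} ≠ 0 then (⊤ : EReal)
          else ((-⟪y, b⟫ : ℝ) : EReal) +
            ((∫⁻ x in {x | 0 < ⟪y, x⟫},
              ENNReal.ofReal (if ‖x‖ ≤ 1 then ⟪y, x⟫ else 0) ∂F : ℝ≥0∞) : EReal))) :=
  stmt_13_general d b c hcsym hcpos F hF2 g hg L hL
end

section
/- Let F be a measure on ℝ^d \ {0} with ∫(|x|²∧1)F(dx) < ∞ and ∫_{|x|>1}|x|F(dx) < ∞, and let φ̃ ∈ ℝ^d satisfy 1 + φ̃ᵀx > 0 for F-a.e. x. Then the integral ∫ [φ̃ᵀx/(1+φ̃ᵀx) − φ̃ᵀh(x)] F(dx) is well defined with values in [−∞, +∞), and equals −∫_{|x|≤1} (φ̃ᵀx)²/(1+φ̃ᵀx) F(dx) − ∫_{|x|>1} 1/(1+φ̃ᵀx) F(dx) + F({|x|>1}). -/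
/-!
On the unit ball the integrand is `-(φᵀx)² / (1 + φᵀx) ≤ 0`, and outside it it is
`1 - q(x)` with `q(x) = 1 / (1 + φᵀx) ≥ 0`, hence at most `1`; since `F({|x| > 1}) < ∞`
(from `∫ |x|² ∧ 1 dF < ∞`), the positive part has finite integral. Outside the ball the pointwise
identity `(1 - q)⁺ + q = 1 + (1 - q)⁻` integrates to an identity in `[0, ∞]`, and the formula
follows from it by arithmetic in `EReal`, distinguishing which of the integrals are infinite.
-/

open MeasureTheory
open scoped RealInnerProductSpace ENNReal

theorem ENNReal.ofReal_sub_add_ofReal {a q : ℝ} (ha : 0 ≤ a) (hq : 0 ≤ q) :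
    ENNReal.ofReal (a - q) + ENNReal.ofReal q = ENNReal.ofReal a + ENNReal.ofReal (q - a) := by
  rcases le_total q a with h | h
  · rw [ENNReal.ofReal_of_nonpos (sub_nonpos.2 h), add_zero,
      ← ENNReal.ofReal_add (sub_nonneg.2 h) hq, sub_add_cancel]
  · rw [ENNReal.ofReal_of_nonpos (sub_nonpos.2 h), zero_add,
      ← ENNReal.ofReal_add ha (sub_nonneg.2 h), add_sub_cancel]

theorem EReal.coe_ennreal_sub_coe_add_eq {a b c e i : ℝ≥0∞} (ha : a ≠ ⊤) (hc : c ≠ ⊤)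
    (h : a + i = c + b) : (a : EReal) - ↑(e + b) = c - e - i := by
  rcases eq_top_or_lt_top e with rfl | he
  · simp
  rcases eq_top_or_lt_top i with rfl | hi
  · have hb : b = ⊤ := by simpa [hc] using h.symm
    simp [hb]
  have hb : b ≠ ⊤ := fun hb ↦ by simp [hb, ha, hi.ne] at h
  lift a to NNReal using ha
  lift b to NNReal using hb
  lift c to NNReal using hc
  lift e to NNReal using he.ne
  lift i to NNReal using hi.ne
  replace h : (a : ℝ) + i = c + b := by exact_mod_cast h
  simp only [← ENNReal.coe_add, EReal.coe_nnreal_eq_coe_real, ← EReal.coe_sub,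
    EReal.coe_eq_coe_iff]
  push_cast
  linarith

theorem lintegral_ofReal_sub_lintegral_ofReal_neg_eq {α : Type*} [MeasurableSpace α]
    {μ : Measure α} {S : Set α} {f p q : α → ℝ} (hS : MeasurableSet S) (hSc : μ Sᶜ ≠ ⊤)
    (hf : Measurable f) (hp : ∀ᵐ x ∂μ.restrict S, f x = -p x ∧ 0 ≤ p x)
    (hq : ∀ᵐ x ∂μ.restrict Sᶜ, f x = 1 - q x ∧ 0 ≤ q x) :
    ∫⁻ x, ENNReal.ofReal (f x) ∂μ < ⊤ ∧
      ((∫⁻ x, ENNReal.ofReal (f x) ∂μ : ℝ≥0∞) : EReal) - ↑(∫⁻ x, ENNReal.ofReal (-f x) ∂μ)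
        = ↑(μ Sᶜ) - ↑(∫⁻ x in S, ENNReal.ofReal (p x) ∂μ)
          - ↑(∫⁻ x in Sᶜ, ENNReal.ofReal (q x) ∂μ) := by
  have hpos_S : ∫⁻ x in S, ENNReal.ofReal (f x) ∂μ = 0 := by
    refine (lintegral_congr_ae ?_).trans lintegral_zero
    filter_upwards [hp] with x ⟨hfx, hpx⟩
    simpa [hfx] using hpx
  have hneg_S : ∫⁻ x in S, ENNReal.ofReal (-f x) ∂μ = ∫⁻ x in S, ENNReal.ofReal (p x) ∂μ := by
    refine lintegral_congr_ae ?_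
    filter_upwards [hp] with x hx
    rw [hx.1, neg_neg]
  have hpos_Sc : ∫⁻ x in Sᶜ, ENNReal.ofReal (f x) ∂μ ≤ μ Sᶜ := by
    refine (lintegral_mono_ae ?_).trans_eq (setLIntegral_one Sᶜ)
    filter_upwards [hq] with x ⟨hfx, hqx⟩
    exact ENNReal.ofReal_le_one.2 (by linarith)
  have hsplit : ∫⁻ x in Sᶜ, ENNReal.ofReal (f x) ∂μ + ∫⁻ x in Sᶜ, ENNReal.ofReal (q x) ∂μ
      = μ Sᶜ + ∫⁻ x in Sᶜ, ENNReal.ofReal (-f x) ∂μ := by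
    rw [← lintegral_add_left hf.ennreal_ofReal, ← setLIntegral_one,
      ← lintegral_add_left measurable_const]
    refine lintegral_congr_ae ?_
    filter_upwards [hq] with x ⟨hfx, hqx⟩
    rw [hfx, ← ENNReal.ofReal_one, ENNReal.ofReal_sub_add_ofReal zero_le_one hqx]
    ring_nf
  rw [← lintegral_add_compl (fun x ↦ ENNReal.ofReal (f x)) hS,
    ← lintegral_add_compl (fun x ↦ ENNReal.ofReal (-f x)) hS, hpos_S, hneg_S, zero_add]
  have hpos_Sc_lt_top := hpos_Sc.trans_lt hSc.lt_top
  exact ⟨hpos_Sc_lt_top, EReal.coe_ennreal_sub_coe_add_eq hpos_Sc_lt_top.ne hSc hsplit⟩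

theorem measure_one_lt_norm_lt_top {E : Type*} [NormedAddCommGroup E] [MeasurableSpace E]
    [OpensMeasurableSpace E] {μ : Measure E}
    (h : ∫⁻ x, ENNReal.ofReal (min (‖x‖ ^ 2) 1) ∂μ < ⊤) : μ {x | 1 < ‖x‖} < ⊤ := by
  refine lt_of_le_of_lt ?_ h
  calc μ {x | 1 < ‖x‖} ≤ μ {x | 1 ≤ ENNReal.ofReal (min (‖x‖ ^ 2) 1)} :=
        measure_mono fun x (hx : 1 < ‖x‖) ↦ by
          simp only [Set.mem_ofPred_eq, min_eq_right (one_le_pow₀ hx.le), ENNReal.ofReal_one,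
            le_refl]
    _ ≤ _ := by simpa only [one_mul] using mul_meas_ge_le_lintegral₀ (by fun_prop) 1

theorem stmt_15_general (d : ℕ)
    (F : Measure (EuclideanSpace ℝ (Fin d)))
    (hF1 : ∫⁻ x, ENNReal.ofReal (min (‖x‖ ^ 2) 1) ∂F < ⊤)
    (φ : EuclideanSpace ℝ (Fin d))
    (hφ : ∀ᵐ x ∂F, 0 < 1 + ⟪φ, x⟫)
    (g : EuclideanSpace ℝ (Fin d) → ℝ)
    (hg : ∀ x, g x = ⟪φ, x⟫ / (1 + ⟪φ, x⟫) - (if ‖x‖ ≤ 1 then ⟪φ, x⟫ else 0)) :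
    -- the integral ∫ g dF is well defined with values in [−∞, +∞):
    (∫⁻ x, ENNReal.ofReal (g x) ∂F) < ⊤ ∧
    -- and it equals  F({|x|>1}) − ∫_{|x|≤1} (φᵀx)²/(1+φᵀx) dF − ∫_{|x|>1} 1/(1+φᵀx) dF :
    ((∫⁻ x, ENNReal.ofReal (g x) ∂F : ℝ≥0∞) : EReal)
        - ((∫⁻ x, ENNReal.ofReal (-(g x)) ∂F : ℝ≥0∞) : EReal)
      = ((F {x | 1 < ‖x‖} : ℝ≥0∞) : EReal)
        - ((∫⁻ x in {x | ‖x‖ ≤ 1}, ENNReal.ofReal (⟪φ, x⟫ ^ 2 / (1 + ⟪φ, x⟫)) ∂F : ℝ≥0∞) : EReal)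
        - ((∫⁻ x in {x | 1 < ‖x‖}, ENNReal.ofReal (1 / (1 + ⟪φ, x⟫)) ∂F : ℝ≥0∞) : EReal) := by
  set S := {x : EuclideanSpace ℝ (Fin d) | ‖x‖ ≤ 1}
  have hS : MeasurableSet S := measurableSet_le measurable_norm measurable_const
  have hSc : {x : EuclideanSpace ℝ (Fin d) | 1 < ‖x‖} = Sᶜ := by ext; simp [S]
  have hFSc : F Sᶜ ≠ ⊤ := hSc ▸ (measure_one_lt_norm_lt_top hF1).ne
  obtain rfl : g = _ := funext hg
  rw [hSc]
  refine lintegral_ofReal_sub_lintegral_ofReal_neg_eq hS hFSc ?_ ?_ ?_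
  · exact Measurable.sub (by fun_prop) (Measurable.ite hS (by fun_prop) measurable_const)
  · filter_upwards [ae_restrict_mem hS, ae_restrict_of_ae hφ] with x (hxS : ‖x‖ ≤ 1) hx
    refine ⟨?_, by positivity⟩
    rw [if_pos hxS]
    field_simp
    ring
  · filter_upwards [ae_restrict_mem hS.compl, ae_restrict_of_ae hφ] with x (hxS : ¬‖x‖ ≤ 1) hx
    refine ⟨?_, by positivity⟩
    rw [if_neg hxS]
    field_simp
    ring

theorem stmt_15 (d : ℕ)
    (F : Measure (EuclideanSpace ℝ (Fin d))) [SigmaFinite F]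
    (hF0 : F {0} = 0)
    (hF1 : ∫⁻ x, ENNReal.ofReal (min (‖x‖ ^ 2) 1) ∂F < ⊤)
    (hF2 : ∫⁻ x in {x | 1 < ‖x‖}, ENNReal.ofReal ‖x‖ ∂F < ⊤)
    (φ : EuclideanSpace ℝ (Fin d))
    (hφ : ∀ᵐ x ∂F, 0 < 1 + ⟪φ, x⟫)
    (g : EuclideanSpace ℝ (Fin d) → ℝ)
    (hg : ∀ x, g x = ⟪φ, x⟫ / (1 + ⟪φ, x⟫) - (if ‖x‖ ≤ 1 then ⟪φ, x⟫ else 0)) :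
    -- the integral ∫ g dF is well defined with values in [−∞, +∞):
    (∫⁻ x, ENNReal.ofReal (g x) ∂F) < ⊤ ∧
    -- and it equals  F({|x|>1}) − ∫_{|x|≤1} (φᵀx)²/(1+φᵀx) dF − ∫_{|x|>1} 1/(1+φᵀx) dF :
    ((∫⁻ x, ENNReal.ofReal (g x) ∂F : ℝ≥0∞) : EReal)
        - ((∫⁻ x, ENNReal.ofReal (-(g x)) ∂F : ℝ≥0∞) : EReal)
      = ((F {x | 1 < ‖x‖} : ℝ≥0∞) : EReal)
        - ((∫⁻ x in {x | ‖x‖ ≤ 1}, ENNReal.ofReal (⟪φ, x⟫ ^ 2 / (1 + ⟪φ, x⟫)) ∂F : ℝ≥0∞) : EReal)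
        - ((∫⁻ x in {x | 1 < ‖x‖}, ENNReal.ofReal (1 / (1 + ⟪φ, x⟫)) ∂F : ℝ≥0∞) : EReal) :=
  stmt_15_general d F hF1 φ hφ g hg
end
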